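/- arXiv:2605.01237 — 9 statements merged into one kernel-verified Lean document; each statement's English description precedes it below -/
import Mathlib

section
/- Let 0<τ1<τ2<1 and let λ≥0 be a common tuning parameter. If θ̂^{τ1}∈S^{τ1} and θ̂^{τ2}∈S^{τ2} are any quantile TVD solutions at levels τ1 and τ2 respectively, then θ̂^{τ1}_i ≤ θ̂^{τ2}_i for every i∈[1:n]; i.e., quantile TVD solutions at different levels with a common tuning parameter never cross. -/
open scoped BigOperators

noncomputable section

namespace QTVD

/-- Quantile (check) loss `ρ_τ(x) = max{τx, (τ-1)x}`. -/
def qloss (τ x : ℝ) : ℝ := max (τ * x) ((τ - 1) * x)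

/-- Total variation `TV(θ) = ∑ |θ_{i+1} - θ_i|` (coordinates indexed `0,…,n-1`). -/
def TV {n : ℕ} (θ : Fin n → ℝ) : ℝ :=
  ∑ i : Fin n, if h : (i : ℕ) + 1 < n then |θ ⟨(i : ℕ) + 1, h⟩ - θ i| else 0

/-- Quantile TVD objective. -/
def obj {n : ℕ} (τ lam : ℝ) (y θ : Fin n → ℝ) : ℝ :=
  (∑ i : Fin n, qloss τ (y i - θ i)) + lam * TV θ

/-- Quantile TVD solution set `S^τ`. -/
def sol {n : ℕ} (τ lam : ℝ) (y : Fin n → ℝ) : Set (Fin n → ℝ) :=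
  {θ | ∀ η : Fin n → ℝ, obj τ lam y θ ≤ obj τ lam y η}

/-- `k`-th smallest entry of `y` restricted to `I` (as extended real;
`⊥` if `k ≤ 0`, `⊤` if `k ≥ |I| + 1`). -/
def orderStat {n : ℕ} (y : Fin n → ℝ) (I : Finset (Fin n)) (k : ℤ) : EReal :=
  if k ≤ 0 then ⊥
  else if (I.card : ℤ) < k then ⊤
  else (((I.val.map y).sort (· ≤ ·)).getD (k.toNat - 1) 0 : ℝ)

/-- The constant `C_{I,J}` for discrete intervals `I=[c:d] ⊆ J=[a:b] ⊆ [0:n-1]`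
(0-based indexing; 1-based `[s:t] ⊆ [j1:j2] ⊆ [1:n]` corresponds to
`c = s-1, d = t-1, a = j1-1, b = j2-1`). -/
def Cconst (n c d a b : ℕ) : ℝ :=
  if 0 < a ∧ b < n - 1 then
    if a < c ∧ d < b then 1 else if c = a ∧ d = b then -1 else 0
  else if a = 0 ∧ b < n - 1 then
    if a < c ∧ d < b then 1 else if c = a ∧ d = b then -(1/2)
      else if c = 0 ∧ d < b then 1/2 else 0
  else if 0 < a ∧ b = n - 1 then
    if a < c ∧ d < b then 1 else if c = a ∧ d = b then -(1/2)
      else if a < c ∧ d = b then 1/2 else 0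
  else
    if a < c ∧ d < b then 1 else if c = a ∧ d = b then 0 else 1/2

/-- `u^τ_{I,J} = τ|I| - 2λ C_{I,J}` for `I=[c:d] ⊆ J=[a:b]`. -/
def uIJ (τ lam : ℝ) (n c d a b : ℕ) : ℝ :=
  τ * ((d : ℝ) - (c : ℝ) + 1) - 2 * lam * Cconst n c d a b

/-- `l^τ_{I,J} = τ|I| + 2λ C_{I,J}` for `I=[c:d] ⊆ J=[a:b]`. -/
def lIJ (τ lam : ℝ) (n c d a b : ℕ) : ℝ :=
  τ * ((d : ℝ) - (c : ℝ) + 1) + 2 * lam * Cconst n c d a b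

/-- Upper envelope `U^τ_i`: min over intervals `J ∋ i` of the max over
subintervals `I ⊆ J` with `i ∈ I` of `y_{I,(⌊u^τ_{I,J}⌋+1)}`. -/
def Uenv {n : ℕ} (τ lam : ℝ) (y : Fin n → ℝ) (i : Fin n) : EReal :=
  ⨅ (a : Fin n) (b : Fin n) (_ : a ≤ i) (_ : i ≤ b),
    ⨆ (c : Fin n) (d : Fin n) (_ : a ≤ c) (_ : c ≤ i) (_ : i ≤ d) (_ : d ≤ b),
      orderStat y (Finset.Icc c d) (⌊uIJ τ lam n (c : ℕ) (d : ℕ) (a : ℕ) (b : ℕ)⌋ + 1)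

/-- Lower envelope `L^τ_i`: max over intervals `J ∋ i` of the min over
subintervals `I ⊆ J` with `i ∈ I` of `y_{I,(⌈l^τ_{I,J}⌉)}`. -/
def Lenv {n : ℕ} (τ lam : ℝ) (y : Fin n → ℝ) (i : Fin n) : EReal :=
  ⨆ (a : Fin n) (b : Fin n) (_ : a ≤ i) (_ : i ≤ b),
    ⨅ (c : Fin n) (d : Fin n) (_ : a ≤ c) (_ : c ≤ i) (_ : i ≤ d) (_ : d ≤ b),
      orderStat y (Finset.Icc c d) ⌈lIJ τ lam n (c : ℕ) (d : ℕ) (a : ℕ) (b : ℕ)⌉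

/-- Admissible dual (KKT) variables `(g, z)` for a candidate solution `θ`.
`z` is indexed by `Fin (n+1)` (so `z 0,…,z n` with `z 0 = z n = 0`); the
edge between coordinates `j` and `j+1` (0-based) corresponds to `z (j+1)`. -/
def IsDual {n : ℕ} (τ lam : ℝ) (y θ : Fin n → ℝ) (g : Fin n → ℝ)
    (z : Fin (n + 1) → ℝ) : Prop :=
  z 0 = 0 ∧ z (Fin.last n) = 0 ∧
  (∀ j : Fin n, ∀ h : (j : ℕ) + 1 < n,
    (θ ⟨(j : ℕ) + 1, h⟩ < θ j → z j.succ = lam) ∧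
    (θ j = θ ⟨(j : ℕ) + 1, h⟩ → -lam ≤ z j.succ ∧ z j.succ ≤ lam) ∧
    (θ j < θ ⟨(j : ℕ) + 1, h⟩ → z j.succ = -lam)) ∧
  (∀ j : Fin n,
    (θ j < y j → g j = -τ) ∧
    (θ j = y j → -τ ≤ g j ∧ g j ≤ 1 - τ) ∧
    (y j < θ j → g j = 1 - τ)) ∧
  (∀ a b : Fin n, a ≤ b → (∑ j ∈ Finset.Icc a b, g j) = z a.castSucc - z b.succ)

/-- `sign_+(x) = 1` if `x ≥ 0`, `-1` if `x < 0`. -/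
def signP (x : ℝ) : ℝ := if 0 ≤ x then 1 else -1

/-- `sign_-(x) = 1` if `x > 0`, `-1` if `x ≤ 0`. -/
def signM (x : ℝ) : ℝ := if 0 < x then 1 else -1

/-- Submodularity with respect to the coordinatewise lattice structure on `ℝ^n`. -/
def Submodular {n : ℕ} (P : (Fin n → ℝ) → ℝ) : Prop :=
  ∀ x y : Fin n → ℝ, P (x ⊔ y) + P (x ⊓ y) ≤ P x + P y

/-- Penalized quantile regression objective with a general penalty `P`. -/
def Gobj {n : ℕ} (τ lam : ℝ) (y : Fin n → ℝ) (P : (Fin n → ℝ) → ℝ)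
    (θ : Fin n → ℝ) : ℝ :=
  (∑ j : Fin n, qloss τ (y j - θ j)) + lam * P θ

end QTVD

/-! If solutions `θ₁` at level `τ₁` and `θ₂` at level `τ₂ > τ₁` crossed, replace them by
`θ₁ ⊓ θ₂` and `θ₁ ⊔ θ₂`. Total variation is submodular, so the penalties do not grow, while
the quantile losses drop by exactly `(τ₂ - τ₁) ∑ (θ₁ i - θ₂ i)⁺ > 0`, because
`ρ_{τ₁} - ρ_{τ₂}` is linear. One of the two replacements would then beat its original. -/

namespace QTVD

theorem qloss_eq_mul_add_max (τ x : ℝ) : qloss τ x = τ * x + max 0 (-x) := by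
  rw [qloss, ← max_add_add_left, add_zero]
  ring_nf

theorem qloss_sub_qloss (τ₁ τ₂ x : ℝ) : qloss τ₁ x - qloss τ₂ x = (τ₁ - τ₂) * x := by
  rw [qloss_eq_mul_add_max, qloss_eq_mul_add_max]
  ring

theorem qloss_add_qloss_eq_min_max (τ₁ τ₂ r a b : ℝ) :
    qloss τ₁ (r - a) + qloss τ₂ (r - b) =
      qloss τ₁ (r - min a b) + qloss τ₂ (r - max a b) + (τ₂ - τ₁) * max (a - b) 0 := by
  rcases le_total a b with hab | hab
  · rw [min_eq_left hab, max_eq_right hab, max_eq_right (sub_nonpos.2 hab)]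
    ring
  · rw [min_eq_right hab, max_eq_left hab, max_eq_left (sub_nonneg.2 hab)]
    linarith [qloss_sub_qloss τ₁ τ₂ (r - a), qloss_sub_qloss τ₁ τ₂ (r - b)]

theorem abs_max_sub_max_add_abs_min_sub_min_le (a b c d : ℝ) :
    |max a b - max c d| + |min a b - min c d| ≤ |a - c| + |b - d| := by
  rcases le_total a b with hab | hab <;> rcases le_total c d with hcd | hcd <;>
    simp only [max_eq_left, max_eq_right, min_eq_left, min_eq_right, hab, hcd] <;>
    grind [abs_le, le_abs_self, neg_abs_le]

theorem submodular_TV {n : ℕ} : Submodular (TV (n := n)) := by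
  intro x y
  simp only [TV, ← Finset.sum_add_distrib]
  refine Finset.sum_le_sum fun i _ => ?_
  split_ifs
  · exact abs_max_sub_max_add_abs_min_sub_min_le _ _ _ _
  · norm_num

theorem le_of_forall_Gobj_le {n : ℕ} {τ₁ τ₂ lam : ℝ} {y : Fin n → ℝ}
    {P : (Fin n → ℝ) → ℝ} (hP : Submodular P) (hτ : τ₁ < τ₂) (hlam : 0 ≤ lam)
    {θ₁ θ₂ : Fin n → ℝ} (h₁ : ∀ η, Gobj τ₁ lam y P θ₁ ≤ Gobj τ₁ lam y P η)
    (h₂ : ∀ η, Gobj τ₂ lam y P θ₂ ≤ Gobj τ₂ lam y P η) : θ₁ ≤ θ₂ := by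
  by_contra hcross
  obtain ⟨i, hi⟩ : ∃ i, θ₂ i < θ₁ i := by simpa [Pi.le_def] using hcross
  have hgap : 0 < ∑ j, max (θ₁ j - θ₂ j) 0 :=
    Finset.sum_pos' (fun j _ => le_max_right _ _)
      ⟨i, Finset.mem_univ i, lt_max_of_lt_left (sub_pos.2 hi)⟩
  have hswap := Finset.sum_congr rfl fun j (_ : j ∈ Finset.univ) =>
    qloss_add_qloss_eq_min_max τ₁ τ₂ (y j) (θ₁ j) (θ₂ j)
  simp only [Finset.sum_add_distrib, ← Finset.mul_sum] at hswap
  have hpen := mul_le_mul_of_nonneg_left (hP θ₁ θ₂) hlam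
  have hmin₁ := h₁ (θ₁ ⊓ θ₂)
  have hmin₂ := h₂ (θ₁ ⊔ θ₂)
  simp only [Gobj, Pi.inf_apply, Pi.sup_apply] at hmin₁ hmin₂
  linarith [mul_pos (sub_pos.2 hτ) hgap]

end QTVD

theorem quantile_tvd_noncrossing_general
    {n : ℕ} (τ₁ τ₂ lam : ℝ) (hτ12 : τ₁ < τ₂)
    (hlam : 0 ≤ lam) (y : Fin n → ℝ)
    (θ₁ : Fin n → ℝ) (hθ₁ : θ₁ ∈ QTVD.sol τ₁ lam y)
    (θ₂ : Fin n → ℝ) (hθ₂ : θ₂ ∈ QTVD.sol τ₂ lam y) :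
    ∀ i : Fin n, θ₁ i ≤ θ₂ i :=
  QTVD.le_of_forall_Gobj_le QTVD.submodular_TV hτ12 hlam hθ₁ hθ₂

/-- Non-crossing of quantile TVD across quantile levels.
If `0 < τ₁ < τ₂ < 1` and a common tuning parameter `λ ≥ 0` is used, then any two
quantile TVD solutions at levels `τ₁` and `τ₂` never cross. -/
theorem quantile_tvd_noncrossing
    {n : ℕ} (τ₁ τ₂ lam : ℝ) (hτ1 : 0 < τ₁) (hτ12 : τ₁ < τ₂) (hτ2 : τ₂ < 1)
    (hlam : 0 ≤ lam) (y : Fin n → ℝ)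
    (θ₁ : Fin n → ℝ) (hθ₁ : θ₁ ∈ QTVD.sol τ₁ lam y)
    (θ₂ : Fin n → ℝ) (hθ₂ : θ₂ ∈ QTVD.sol τ₂ lam y) :
    ∀ i : Fin n, θ₁ i ≤ θ₂ i :=
  quantile_tvd_noncrossing_general τ₁ τ₂ lam hτ12 hlam y θ₁ hθ₁ θ₂ hθ₂
end
end

section
/- Fix τ∈(0,1) and λ≥0. A vector θ̂∈ℝ^n belongs to the quantile TVD solution set S^τ if and only if there exist vectors g=(g_1,…,g_n)∈ℝ^n and z=(z_0,…,z_n)∈ℝ^{n+1} such that: (1) z_0=z_n=0 and, for each k=1,…,n−1, z_k=λ if θ̂_k>θ̂_{k+1}, z_k∈[−λ,λ] if θ̂_k=θ̂_{k+1}, and z_k=−λ if θ̂_k<θ̂_{k+1}; (2) for each j, g_j=−τ if θ̂_j<y_j, g_j∈[−τ,1−τ] if θ̂_j=y_j, and g_j=1−τ if θ̂_j>y_j; (3) for every discrete interval [a:b]⊆[1:n], Σ_{j=a}^b g_j = z_{a−1} − z_b. -/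
open scoped BigOperators

noncomputable section

namespace QP
open Finset QTVD

variable {n : ℕ}

def ext {n : ℕ} (f : Fin n → ℝ) : ℕ → ℝ := fun j => if h : j < n then f ⟨j, h⟩ else 0

lemma ext_lt {f : Fin n → ℝ} {j : ℕ} (h : j < n) : ext f j = f ⟨j, h⟩ := dif_pos h

lemma sum_fin (f : Fin n → ℝ) : ∑ i : Fin n, f i = ∑ i ∈ range n, ext f i := by
  rw [← Fin.sum_univ_eq_sum_range (ext f) n]
  exact Finset.sum_congr rfl (fun i _ => by rw [ext_lt i.isLt])

lemma tv_eq (θ : Fin n → ℝ) :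
    TV θ = ∑ i ∈ range (n - 1), |ext θ (i + 1) - ext θ i| := by
  unfold TV
  have h1 : ∀ i : Fin n,
      (if h : (i : ℕ) + 1 < n then |θ ⟨(i : ℕ) + 1, h⟩ - θ i| else 0)
        = (fun j : ℕ => if j + 1 < n then |ext θ (j + 1) - ext θ j| else 0) (i : ℕ) := by
    intro i
    by_cases h : (i : ℕ) + 1 < n
    · simp only [dif_pos h, if_pos h, ext_lt h, ext_lt i.isLt]
    · simp only [dif_neg h, if_neg h]
  rw [Finset.sum_congr rfl (fun i _ => h1 i),
    Fin.sum_univ_eq_sum_range (fun j : ℕ => if j + 1 < n then |ext θ (j + 1) - ext θ j| else 0) n]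
  rw [← Finset.sum_subset (Finset.range_subset_range.mpr (Nat.sub_le n 1))
    (fun x hx hx2 => by
      rw [if_neg]
      have := Finset.mem_range.mp hx
      have h2 : ¬ x < n - 1 := fun h => hx2 (Finset.mem_range.mpr h)
      omega)]
  exact Finset.sum_congr rfl (fun i hi => by
    rw [if_pos]
    have := Finset.mem_range.mp hi; omega)

lemma obj_eq (τ lam : ℝ) (y θ : Fin n → ℝ) :
    obj τ lam y θ = (∑ j ∈ range n, qloss τ (ext y j - ext θ j))
      + lam * ∑ i ∈ range (n - 1), |ext θ (i + 1) - ext θ i| := by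
  unfold obj
  rw [tv_eq]
  congr 1
  rw [sum_fin]
  exact Finset.sum_congr rfl (fun i hi => by
    have h : i < n := Finset.mem_range.mp hi
    simp [ext, h])

lemma qloss_eq_if (τ x : ℝ) : qloss τ x = if 0 ≤ x then τ * x else (τ - 1) * x := by
  unfold qloss
  rcases le_or_gt 0 x with hx | hx
  · rw [if_pos hx, max_eq_left (by nlinarith)]
  · rw [if_neg (not_le.mpr hx), max_eq_right (by nlinarith)]

lemma qloss_ge {τ g : ℝ} (x : ℝ) (h1 : -τ ≤ g) (h2 : g ≤ 1 - τ) :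
    -g * x ≤ qloss τ x := by
  unfold qloss
  rcases le_or_gt 0 x with hx | hx
  · exact le_max_of_le_left (by nlinarith)
  · exact le_max_of_le_right (by nlinarith)


def gLo (τ : ℝ) (Y Θ : ℕ → ℝ) (j : ℕ) : ℝ := if Θ j ≤ Y j then -τ else 1 - τ
def gHi (τ : ℝ) (Y Θ : ℕ → ℝ) (j : ℕ) : ℝ := if Y j ≤ Θ j then 1 - τ else -τ
def zLo (n : ℕ) (lam : ℝ) (Θ : ℕ → ℝ) (k : ℕ) : ℝ :=
  if 1 ≤ k ∧ k < n then (if Θ k < Θ (k - 1) then lam else -lam) else 0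
def zHi (n : ℕ) (lam : ℝ) (Θ : ℕ → ℝ) (k : ℕ) : ℝ :=
  if 1 ≤ k ∧ k < n then (if Θ (k - 1) < Θ k then -lam else lam) else 0

lemma gLo_le_gHi (τ : ℝ) (Y Θ : ℕ → ℝ) (j : ℕ) : gLo τ Y Θ j ≤ gHi τ Y Θ j := by
  unfold gLo gHi; split_ifs <;> linarith

lemma zLo_le_zHi {lam : ℝ} (hlam : 0 ≤ lam) (n : ℕ) (Θ : ℕ → ℝ) (k : ℕ) :
    zLo n lam Θ k ≤ zHi n lam Θ k := by
  unfold zLo zHi; split_ifs <;> linarith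

lemma zLo_bot (n : ℕ) (lam : ℝ) (Θ : ℕ → ℝ) {k : ℕ} (h : ¬ (1 ≤ k ∧ k < n)) :
    zLo n lam Θ k = 0 := if_neg h

lemma zHi_bot (n : ℕ) (lam : ℝ) (Θ : ℕ → ℝ) {k : ℕ} (h : ¬ (1 ≤ k ∧ k < n)) :
    zHi n lam Θ k = 0 := if_neg h

def w (n : ℕ) (τ lam : ℝ) (Y Θ : ℕ → ℝ) (k m : ℕ) : ℝ :=
  if m ≤ k then zLo n lam Θ m - ∑ j ∈ Ico m k, gHi τ Y Θ j
  else zLo n lam Θ m + ∑ j ∈ Ico k m, gLo τ Y Θ j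

def Z (n : ℕ) (τ lam : ℝ) (Y Θ : ℕ → ℝ) (k : ℕ) : ℝ :=
  (range (n + 1)).sup' Finset.nonempty_range_add_one (w n τ lam Y Θ k)

/-- Family 1 of optimality inequalities. -/
def Fam1 (n : ℕ) (τ lam : ℝ) (Y Θ : ℕ → ℝ) : Prop :=
  ∀ m k, m ≤ k → k ≤ n →
    zLo n lam Θ m - zHi n lam Θ k ≤ ∑ j ∈ Ico m k, gHi τ Y Θ j

/-- Family 2 of optimality inequalities. -/
def Fam2 (n : ℕ) (τ lam : ℝ) (Y Θ : ℕ → ℝ) : Prop :=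
  ∀ m k, m ≤ k → k ≤ n →
    ∑ j ∈ Ico m k, gLo τ Y Θ j ≤ zHi n lam Θ m - zLo n lam Θ k

section Zlem
variable {n : ℕ} {τ lam : ℝ} {Y Θ : ℕ → ℝ}

lemma Z_ge_zLo (k : ℕ) (hk : k ≤ n) : zLo n lam Θ k ≤ Z n τ lam Y Θ k := by
  have : w n τ lam Y Θ k k = zLo n lam Θ k := by simp [w]
  rw [← this]
  exact Finset.le_sup' _ (Finset.mem_range.mpr (by omega))

lemma Z_le_zHi (f1 : Fam1 n τ lam Y Θ) (f2 : Fam2 n τ lam Y Θ)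
    (k : ℕ) (hk : k ≤ n) : Z n τ lam Y Θ k ≤ zHi n lam Θ k := by
  apply Finset.sup'_le
  intro m hm
  have hm' : m ≤ n := by have := Finset.mem_range.mp hm; omega
  unfold w
  split_ifs with h
  · have := f1 m k h hk
    linarith
  · have := f2 k m (by omega) hm'
    linarith

lemma Z_diff_le_gHi (f1 : Fam1 n τ lam Y Θ) (f2 : Fam2 n τ lam Y Θ)
    {k : ℕ} (hk : k + 1 ≤ n) :
    Z n τ lam Y Θ k - Z n τ lam Y Θ (k + 1) ≤ gHi τ Y Θ k := by
  rw [sub_le_iff_le_add, add_comm]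
  apply Finset.sup'_le
  intro m hm
  have hm' : m ≤ n := by have := Finset.mem_range.mp hm; omega
  rcases Nat.lt_trichotomy m (k + 1) with h | h | h
  · -- m ≤ k
    have hmk : m ≤ k := by omega
    have h1 : w n τ lam Y Θ k m = w n τ lam Y Θ (k + 1) m + gHi τ Y Θ k := by
      rw [w, w, if_pos hmk, if_pos (by omega), Finset.sum_Ico_succ_top hmk]
      ring
    have h2 : w n τ lam Y Θ (k + 1) m ≤ Z n τ lam Y Θ (k + 1) :=
      Finset.le_sup' _ hm
    linarith
  · subst h
    have h1 : w n τ lam Y Θ k (k + 1) = zLo n lam Θ (k + 1) + gLo τ Y Θ k := by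
      rw [w, if_neg (by omega)]
      congr 1
      rw [Nat.Ico_succ_singleton, Finset.sum_singleton]
    have h2 := Z_ge_zLo (n := n) (τ := τ) (lam := lam) (Y := Y) (Θ := Θ) (k + 1) hk
    have h3 := gLo_le_gHi τ Y Θ k
    linarith
  · have hsum : ∑ j ∈ Ico k m, gLo τ Y Θ j
        = gLo τ Y Θ k + ∑ j ∈ Ico (k + 1) m, gLo τ Y Θ j :=
      Finset.sum_eq_sum_Ico_succ_bot (by omega) _
    have h1 : w n τ lam Y Θ k m = w n τ lam Y Θ (k + 1) m + gLo τ Y Θ k := by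
      rw [w, w, if_neg (by omega), if_neg (by omega), hsum]; ring
    have h2 : w n τ lam Y Θ (k + 1) m ≤ Z n τ lam Y Θ (k + 1) :=
      Finset.le_sup' _ hm
    have h3 := gLo_le_gHi τ Y Θ k
    linarith

lemma gLo_le_Z_diff (f1 : Fam1 n τ lam Y Θ) (f2 : Fam2 n τ lam Y Θ)
    {k : ℕ} (hk : k + 1 ≤ n) :
    gLo τ Y Θ k ≤ Z n τ lam Y Θ k - Z n τ lam Y Θ (k + 1) := by
  rw [le_sub_iff_add_le, add_comm, ← le_sub_iff_add_le]
  apply Finset.sup'_le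
  intro m hm
  have hm' : m ≤ n := by have := Finset.mem_range.mp hm; omega
  rcases Nat.lt_trichotomy m (k + 1) with h | h | h
  · have hmk : m ≤ k := by omega
    have h1 : w n τ lam Y Θ k m = w n τ lam Y Θ (k + 1) m + gHi τ Y Θ k := by
      rw [w, w, if_pos hmk, if_pos (by omega), Finset.sum_Ico_succ_top hmk]
      ring
    have h2 : w n τ lam Y Θ k m ≤ Z n τ lam Y Θ k := Finset.le_sup' _ hm
    have h3 := gLo_le_gHi τ Y Θ k
    linarith
  · subst h
    have h1 : w n τ lam Y Θ (k + 1) (k + 1) = zLo n lam Θ (k + 1) := by simp [w]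
    have h2 : w n τ lam Y Θ k (k + 1) = zLo n lam Θ (k + 1) + gLo τ Y Θ k := by
      rw [w, if_neg (by omega)]
      congr 1
      rw [Nat.Ico_succ_singleton, Finset.sum_singleton]
    have h3 : w n τ lam Y Θ k (k + 1) ≤ Z n τ lam Y Θ k :=
      Finset.le_sup' _ (Finset.mem_range.mpr (by omega))
    linarith
  · have hsum : ∑ j ∈ Ico k m, gLo τ Y Θ j
        = gLo τ Y Θ k + ∑ j ∈ Ico (k + 1) m, gLo τ Y Θ j :=
      Finset.sum_eq_sum_Ico_succ_bot (by omega) _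
    have h1 : w n τ lam Y Θ k m = w n τ lam Y Θ (k + 1) m + gLo τ Y Θ k := by
      rw [w, w, if_neg (by omega), if_neg (by omega), hsum]; ring
    have h2 : w n τ lam Y Θ k m ≤ Z n τ lam Y Θ k := Finset.le_sup' _ hm
    linarith

lemma Z_zero (f1 : Fam1 n τ lam Y Θ) (f2 : Fam2 n τ lam Y Θ) :
    Z n τ lam Y Θ 0 = 0 := by
  have h1 := Z_ge_zLo (n := n) (τ := τ) (lam := lam) (Y := Y) (Θ := Θ) 0 (by omega)
  have h2 := Z_le_zHi f1 f2 0 (by omega)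
  rw [zLo_bot n lam Θ (by omega)] at h1
  rw [zHi_bot n lam Θ (by omega)] at h2
  linarith

lemma Z_last (f1 : Fam1 n τ lam Y Θ) (f2 : Fam2 n τ lam Y Θ) :
    Z n τ lam Y Θ n = 0 := by
  have h1 := Z_ge_zLo (n := n) (τ := τ) (lam := lam) (Y := Y) (Θ := Θ) n le_rfl
  have h2 := Z_le_zHi f1 f2 n le_rfl
  rw [zLo_bot n lam Θ (by omega)] at h1
  rw [zHi_bot n lam Θ (by omega)] at h2
  linarith

end Zlem

lemma sum_Icc_telescope (f : ℕ → ℝ) {a b : ℕ} (h : a ≤ b) :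
    ∑ j ∈ Icc a b, (f j - f (j + 1)) = f a - f (b + 1) := by
  induction b, h using Nat.le_induction with
  | base => simp
  | succ b hb ih =>
    rw [Finset.sum_Icc_succ_top (by omega), ih]
    ring

lemma ind_sum {n m k : ℕ} (hk : k ≤ n) (f : ℕ → ℝ) :
    ∑ j ∈ range n, (if m ≤ j ∧ j < k then f j else 0) = ∑ j ∈ Ico m k, f j := by
  have h : ∀ j ∈ range n, (if m ≤ j ∧ j < k then f j else 0)
      = if j ∈ Ico m k then f j else 0 := fun j _ => by simp only [Finset.mem_Ico]
  rw [Finset.sum_congr rfl h, Finset.sum_ite_mem]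
  congr 1
  rw [Finset.inter_eq_right]
  intro x hx
  have := Finset.mem_Ico.mp hx
  exact Finset.mem_range.mpr (by omega)

set_option maxHeartbeats 1000000 in
lemma fam1_of_sol {n : ℕ} {τ lam : ℝ} (hτ0 : 0 < τ) (hτ1 : τ < 1) (hlam : 0 ≤ lam)
    {y θ : Fin n → ℝ} (hsol : θ ∈ sol τ lam y) :
    Fam1 n τ lam (ext y) (ext θ) := by
  intro m k hmk hkn
  set Y := ext y with hY
  set Θ := ext θ with hΘ
  rcases eq_or_lt_of_le hmk with rfl | hlt
  · have := zLo_le_zHi hlam n Θ m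
    simp only [Finset.Ico_self, Finset.sum_empty]
    linarith
  -- main case : m < k ≤ n
  classical
  set L : ℝ := if 1 ≤ m ∧ Θ m < Θ (m - 1) then Θ (m - 1) - Θ m else 1 with hL
  set R : ℝ := if k < n ∧ Θ (k - 1) < Θ k then Θ k - Θ (k - 1) else 1 with hR
  set G : ℕ → ℝ := fun j => if Θ j < Y j then Y j - Θ j else 1 with hG
  have hne : (Ico m k).Nonempty := ⟨m, Finset.mem_Ico.mpr ⟨le_rfl, hlt⟩⟩
  set ε : ℝ := min (min L R) ((Ico m k).inf' hne G) with hε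
  have hLpos : 0 < L := by
    rw [hL]; split_ifs with h
    exacts [by linarith [h.2], one_pos]
  have hRpos : 0 < R := by
    rw [hR]; split_ifs with h
    exacts [by linarith [h.2], one_pos]
  have hGpos : ∀ j, 0 < G j := by
    intro j; rw [hG]; dsimp only; split_ifs with h
    exacts [by linarith, one_pos]
  have hεpos : 0 < ε := by
    rw [hε]
    apply lt_min (lt_min hLpos hRpos)
    exact (Finset.lt_inf'_iff hne).mpr fun j _ => hGpos j
  have hεL : ε ≤ L := le_trans (min_le_left _ _) (min_le_left _ _)
  have hεR : ε ≤ R := le_trans (min_le_left _ _) (min_le_right _ _)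
  have hεG : ∀ j ∈ Ico m k, ε ≤ G j := fun j hj =>
    le_trans (min_le_right _ _) (Finset.inf'_le G hj)
  clear_value ε
  -- the perturbed vector
  set η : Fin n → ℝ := fun i => θ i + (if m ≤ (i : ℕ) ∧ (i : ℕ) < k then ε else 0)
    with hη
  have hextη : ∀ j, j < n → ext η j = Θ j + (if m ≤ j ∧ j < k then ε else 0) := by
    intro j hj
    rw [ext_lt hj, hη, hΘ, ext_lt hj]
  -- loss bound
  have hloss : ∑ j ∈ range n, qloss τ (Y j - ext η j)
      ≤ (∑ j ∈ range n, qloss τ (Y j - Θ j))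
        + ε * ∑ j ∈ Ico m k, gHi τ Y Θ j := by
    have key : ∀ j ∈ range n, qloss τ (Y j - ext η j)
        ≤ qloss τ (Y j - Θ j) + ε * (if m ≤ j ∧ j < k then gHi τ Y Θ j else 0) := by
      intro j hj
      have hjn : j < n := Finset.mem_range.mp hj
      rw [hextη j hjn]
      by_cases hmem : m ≤ j ∧ j < k
      · rw [if_pos hmem, if_pos hmem]
        rcases le_or_gt (Y j) (Θ j) with hle | hgt
        · -- x ≤ 0, gHi = 1 - τ, exact equality
          rw [gHi, if_pos hle, qloss_eq_if, qloss_eq_if]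
          split_ifs with h1 h2 h2 <;> nlinarith
        · -- Θ j < Y j : need ε ≤ Y j - Θ j
          have hεj : ε ≤ Y j - Θ j := by
            have := hεG j (Finset.mem_Ico.mpr hmem)
            rw [hG] at this; dsimp only at this; rw [if_pos hgt] at this
            exact this
          rw [gHi, if_neg (not_le.mpr hgt), qloss_eq_if, qloss_eq_if]
          split_ifs with h1 h2 h2 <;> nlinarith
      · rw [if_neg hmem, if_neg hmem]
        simp
    calc ∑ j ∈ range n, qloss τ (Y j - ext η j)
        ≤ ∑ j ∈ range n, (qloss τ (Y j - Θ j)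
            + ε * (if m ≤ j ∧ j < k then gHi τ Y Θ j else 0)) :=
          Finset.sum_le_sum key
      _ = (∑ j ∈ range n, qloss τ (Y j - Θ j))
            + ε * ∑ j ∈ range n, (if m ≤ j ∧ j < k then gHi τ Y Θ j else 0) := by
          rw [Finset.sum_add_distrib, Finset.mul_sum]
      _ = _ := by rw [ind_sum hkn]
  -- TV bound
  have hTV : lam * ∑ i ∈ range (n - 1), |ext η (i + 1) - ext η i|
      ≤ lam * (∑ i ∈ range (n - 1), |Θ (i + 1) - Θ i|)
        + ε * (-(zLo n lam Θ m) + zHi n lam Θ k) := by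
    have keyTV : ∀ i ∈ range (n - 1),
        lam * |ext η (i + 1) - ext η i|
          ≤ lam * |Θ (i + 1) - Θ i|
            + ε * ((if i + 1 = m then -(zLo n lam Θ m) else 0)
              + (if i + 1 = k then zHi n lam Θ k else 0)) := by
      intro i hi
      have hin : i < n - 1 := Finset.mem_range.mp hi
      have hi1n : i + 1 < n := by omega
      have hin' : i < n := by omega
      rw [hextη i hin', hextη (i + 1) hi1n]
      by_cases him : i + 1 = m
      · -- left boundary edge
        have h1 : ¬ (m ≤ i ∧ i < k) := by omega
        have h2 : (m ≤ i + 1 ∧ i + 1 < k) := by omega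
        have h3 : ¬ (i + 1 = k) := by omega
        rw [if_neg h1, if_pos h2, if_pos him, if_neg h3, add_zero, add_zero]
        have hcond : 1 ≤ m ∧ m < n := by omega
        rw [zLo, if_pos hcond]
        have hm1 : m - 1 = i := by omega
        rcases lt_or_ge (Θ m) (Θ (m - 1)) with hc | hc
        · rw [if_pos hc]
          have hεle : ε ≤ Θ (m - 1) - Θ m := by
            rw [hL] at hεL
            rwa [if_pos ⟨hcond.1, hc⟩] at hεL
          rw [hm1, ← him] at hc hεle
          have e1 : Θ (i + 1) - Θ i + ε ≤ 0 := by linarith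
          have e2 : Θ (i + 1) - Θ i ≤ 0 := by linarith
          rw [show Θ (i + 1) + ε - Θ i = Θ (i + 1) - Θ i + ε by ring,
            abs_of_nonpos e1, abs_of_nonpos e2]
          have : lam * -(Θ (i + 1) - Θ i + ε) = lam * -(Θ (i + 1) - Θ i) + ε * -lam := by
            ring
          linarith
        · rw [if_neg (not_lt.mpr hc)]
          rw [hm1, ← him] at hc
          have e2 : 0 ≤ Θ (i + 1) - Θ i := by linarith
          have e1 : 0 ≤ Θ (i + 1) - Θ i + ε := by linarith
          rw [show Θ (i + 1) + ε - Θ i = Θ (i + 1) - Θ i + ε by ring,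
            abs_of_nonneg e1, abs_of_nonneg e2]
          have : lam * (Θ (i + 1) - Θ i + ε) = lam * (Θ (i + 1) - Θ i) + ε * - -lam := by
            ring
          linarith
      · by_cases hik : i + 1 = k
        · -- right boundary edge
          have h1 : (m ≤ i ∧ i < k) := by omega
          have h2 : ¬ (m ≤ i + 1 ∧ i + 1 < k) := by omega
          rw [if_pos h1, if_neg h2, if_neg him, if_pos hik, add_zero, zero_add]
          have hcond : 1 ≤ k ∧ k < n := by omega
          rw [zHi, if_pos hcond]
          have hk1 : k - 1 = i := by omega
          rcases lt_or_ge (Θ (k - 1)) (Θ k) with hc | hc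
          · rw [if_pos hc]
            have hεle : ε ≤ Θ k - Θ (k - 1) := by
              rw [hR] at hεR
              rwa [if_pos ⟨hcond.2, hc⟩] at hεR
            rw [hk1, ← hik] at hc hεle
            have e1 : 0 ≤ Θ (i + 1) - Θ i - ε := by linarith
            have e2 : 0 ≤ Θ (i + 1) - Θ i := by linarith
            rw [show Θ (i + 1) - (Θ i + ε) = Θ (i + 1) - Θ i - ε by ring,
              abs_of_nonneg e1, abs_of_nonneg e2]
            have : lam * (Θ (i + 1) - Θ i - ε) = lam * (Θ (i + 1) - Θ i) + ε * -lam := by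
              ring
            linarith
          · rw [if_neg (not_lt.mpr hc)]
            rw [hk1, ← hik] at hc
            have e2 : Θ (i + 1) - Θ i ≤ 0 := by linarith
            have e1 : Θ (i + 1) - Θ i - ε ≤ 0 := by linarith
            rw [show Θ (i + 1) - (Θ i + ε) = Θ (i + 1) - Θ i - ε by ring,
              abs_of_nonpos e1, abs_of_nonpos e2]
            have : lam * -(Θ (i + 1) - Θ i - ε) = lam * -(Θ (i + 1) - Θ i) + ε * lam := by
              ring
            linarith
        · -- interior / far edge : indicators agree
          have hiff : (m ≤ i + 1 ∧ i + 1 < k) ↔ (m ≤ i ∧ i < k) := by omega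
          rw [if_neg him, if_neg hik, add_zero, mul_zero, add_zero]
          by_cases hx : m ≤ i ∧ i < k
          · rw [if_pos hx, if_pos (hiff.mpr hx)]
            have : Θ (i + 1) + ε - (Θ i + ε) = Θ (i + 1) - Θ i := by ring
            rw [this]
          · rw [if_neg hx, if_neg (fun h => hx (hiff.mp h))]
            simp
    have hsum1 : ∑ i ∈ range (n - 1), (if i + 1 = m then -(zLo n lam Θ m) else 0)
        = -(zLo n lam Θ m) := by
      by_cases hm1 : 1 ≤ m
      · have : ∀ i ∈ range (n - 1),
            (if i + 1 = m then -(zLo n lam Θ m) else 0)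
              = (if i = m - 1 then -(zLo n lam Θ m) else 0) := by
          intro i _
          congr 1
          simp only [eq_iff_iff]
          omega
        rw [Finset.sum_congr rfl this, Finset.sum_ite_eq' (range (n - 1)) (m - 1)]
        rw [if_pos (Finset.mem_range.mpr (by omega))]
      · have hm0 : m = 0 := by omega
        rw [hm0, zLo_bot n lam Θ (by omega)]
        simp
    have hsum2 : ∑ i ∈ range (n - 1), (if i + 1 = k then zHi n lam Θ k else 0)
        = zHi n lam Θ k := by
      by_cases hk1 : k < n
      · have : ∀ i ∈ range (n - 1),
            (if i + 1 = k then zHi n lam Θ k else 0)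
              = (if i = k - 1 then zHi n lam Θ k else 0) := by
          intro i _
          congr 1
          simp only [eq_iff_iff]
          omega
        rw [Finset.sum_congr rfl this, Finset.sum_ite_eq' (range (n - 1)) (k - 1)]
        rw [if_pos (Finset.mem_range.mpr (by omega))]
      · have hk0 : k = n := by omega
        rw [hk0, zHi_bot n lam Θ (by omega)]
        have : ∀ i ∈ range (n - 1), (if i + 1 = n then (0:ℝ) else 0) = 0 := by
          intro i _; split_ifs <;> rfl
        simp
    calc lam * ∑ i ∈ range (n - 1), |ext η (i + 1) - ext η i|
        = ∑ i ∈ range (n - 1), lam * |ext η (i + 1) - ext η i| := Finset.mul_sum _ _ _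
      _ ≤ ∑ i ∈ range (n - 1), (lam * |Θ (i + 1) - Θ i|
            + ε * ((if i + 1 = m then -(zLo n lam Θ m) else 0)
              + (if i + 1 = k then zHi n lam Θ k else 0))) := Finset.sum_le_sum keyTV
      _ = lam * (∑ i ∈ range (n - 1), |Θ (i + 1) - Θ i|)
            + ε * (-(zLo n lam Θ m) + zHi n lam Θ k) := by
          rw [Finset.sum_add_distrib, ← Finset.mul_sum, ← Finset.mul_sum,
            Finset.sum_add_distrib, hsum1, hsum2]
  -- combine
  have hobj := hsol η
  rw [obj_eq, obj_eq] at hobj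
  have hQ : 0 ≤ ε * ((∑ j ∈ Ico m k, gHi τ Y Θ j) - zLo n lam Θ m + zHi n lam Θ k) := by
    nlinarith [hloss, hTV, hobj]
  have := (mul_nonneg_iff_of_pos_left hεpos).mp hQ
  linarith

lemma qloss_neg (τ x : ℝ) : qloss (1 - τ) (-x) = qloss τ x := by
  simp only [qloss]
  rw [max_comm]
  congr 1 <;> ring

lemma tv_neg {n : ℕ} (θ : Fin n → ℝ) : TV (fun i => -θ i) = TV θ := by
  unfold TV
  apply Finset.sum_congr rfl
  intro i _
  by_cases h : (i : ℕ) + 1 < n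
  · rw [dif_pos h, dif_pos h,
      show -θ ⟨(i : ℕ) + 1, h⟩ - -θ i = -(θ ⟨(i : ℕ) + 1, h⟩ - θ i) by ring, abs_neg]
  · rw [dif_neg h, dif_neg h]

lemma obj_neg {n : ℕ} (τ lam : ℝ) (y η : Fin n → ℝ) :
    obj (1 - τ) lam (fun i => -y i) (fun i => -η i) = obj τ lam y η := by
  unfold obj
  rw [tv_neg]
  congr 1
  apply Finset.sum_congr rfl
  intro i _
  rw [show -y i - -η i = -(y i - η i) by ring, qloss_neg]

lemma sol_neg {n : ℕ} {τ lam : ℝ} {y θ : Fin n → ℝ} (h : θ ∈ sol τ lam y) :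
    (fun i => -θ i) ∈ sol (1 - τ) lam (fun i => -y i) := by
  intro η'
  have h2 := h (fun i => -η' i)
  have e1 : obj (1 - τ) lam (fun i => -y i) (fun i => -θ i) = obj τ lam y θ :=
    obj_neg τ lam y θ
  have e2 : obj (1 - τ) lam (fun i => -y i) η' = obj τ lam y (fun i => -η' i) := by
    rw [← obj_neg τ lam y (fun i => -η' i)]
    congr 1
    funext i
    simp
  rw [e1, e2]
  exact h2

lemma ext_neg {n : ℕ} (f : Fin n → ℝ) (j : ℕ) :
    ext (fun i => -f i) j = -(ext f j) := by
  unfold ext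
  split <;> simp

lemma gHi_neg (τ : ℝ) (Y Θ : ℕ → ℝ) (j : ℕ) :
    gHi (1 - τ) (fun i => -(Y i)) (fun i => -(Θ i)) j = -(gLo τ Y Θ j) := by
  unfold gHi gLo
  simp only [neg_le_neg_iff]
  split_ifs <;> ring

lemma zLo_neg (n : ℕ) (lam : ℝ) (Θ : ℕ → ℝ) (k : ℕ) :
    zLo n lam (fun i => -(Θ i)) k = -(zHi n lam Θ k) := by
  unfold zLo zHi
  simp only [neg_lt_neg_iff]
  split_ifs <;> ring

lemma zHi_neg (n : ℕ) (lam : ℝ) (Θ : ℕ → ℝ) (k : ℕ) :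
    zHi n lam (fun i => -(Θ i)) k = -(zLo n lam Θ k) := by
  unfold zLo zHi
  simp only [neg_lt_neg_iff]
  split_ifs <;> ring

lemma fam2_of_sol {n : ℕ} {τ lam : ℝ} (hτ0 : 0 < τ) (hτ1 : τ < 1) (hlam : 0 ≤ lam)
    {y θ : Fin n → ℝ} (hsol : θ ∈ sol τ lam y) :
    Fam2 n τ lam (ext y) (ext θ) := by
  intro m k hmk hkn
  have h1 := fam1_of_sol (by linarith : (0:ℝ) < 1 - τ) (by linarith : 1 - τ < 1)
    hlam (sol_neg hsol) m k hmk hkn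
  have heθ : ext (fun i => -θ i) = fun j => -(ext θ j) := funext fun j => ext_neg θ j
  have hey : ext (fun i => -y i) = fun j => -(ext y j) := funext fun j => ext_neg y j
  rw [heθ, hey] at h1
  rw [zLo_neg, zHi_neg] at h1
  have hs : ∑ j ∈ Ico m k, gHi (1 - τ) (fun i => -(ext y i)) (fun i => -(ext θ i)) j
      = -∑ j ∈ Ico m k, gLo τ (ext y) (ext θ) j := by
    rw [← Finset.sum_neg_distrib]
    exact Finset.sum_congr rfl fun j _ => gHi_neg τ (ext y) (ext θ) j
  rw [hs] at h1
  linarith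

lemma forward {n : ℕ} {τ lam : ℝ} (hτ0 : 0 < τ) (hτ1 : τ < 1) (hlam : 0 ≤ lam)
    {y θ : Fin n → ℝ} (hsol : θ ∈ sol τ lam y) :
    ∃ g : Fin n → ℝ, ∃ z : Fin (n + 1) → ℝ, IsDual τ lam y θ g z := by
  have f1 := fam1_of_sol hτ0 hτ1 hlam hsol
  have f2 := fam2_of_sol hτ0 hτ1 hlam hsol
  set Y := ext y with hY
  set Θ := ext θ with hΘ
  set Zf : ℕ → ℝ := Z n τ lam Y Θ with hZf
  refine ⟨fun j => Zf (j : ℕ) - Zf ((j : ℕ) + 1), fun k => Zf (k : ℕ),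
    ?_, ?_, ?_, ?_, ?_⟩
  · show Zf ((0 : Fin (n + 1)) : ℕ) = 0
    rw [Fin.val_zero]
    exact Z_zero f1 f2
  · show Zf ((Fin.last n : Fin (n + 1)) : ℕ) = 0
    rw [Fin.val_last]
    exact Z_last f1 f2
  · intro j h
    have hj1 : (j : ℕ) + 1 ≤ n := le_of_lt h
    have hz : (fun k : Fin (n + 1) => Zf (k : ℕ)) j.succ = Zf ((j : ℕ) + 1) := rfl
    have hlow := Z_ge_zLo (n := n) (τ := τ) (lam := lam) (Y := Y) (Θ := Θ)
      ((j : ℕ) + 1) hj1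
    have hhigh := Z_le_zHi f1 f2 ((j : ℕ) + 1) hj1
    have hcond : 1 ≤ (j : ℕ) + 1 ∧ (j : ℕ) + 1 < n := ⟨by omega, h⟩
    have hΘk : Θ ((j : ℕ) + 1) = θ ⟨(j : ℕ) + 1, h⟩ := ext_lt h
    have hΘj : Θ ((j : ℕ) + 1 - 1) = θ j := by
      rw [show (j : ℕ) + 1 - 1 = (j : ℕ) from rfl, hΘ, ext_lt j.isLt, Fin.eta]
    rw [zLo, if_pos hcond, hΘk, hΘj] at hlow
    rw [zHi, if_pos hcond, hΘk, hΘj] at hhigh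
    refine ⟨?_, ?_, ?_⟩
    · intro hlt
      rw [if_pos hlt] at hlow
      rw [if_neg (by intro hx; exact absurd (lt_trans hlt hx) (lt_irrefl _))] at hhigh
      rw [hz]
      linarith
    · intro heq
      rw [if_neg (by rw [heq]; exact lt_irrefl _)] at hlow
      rw [if_neg (by rw [heq]; exact lt_irrefl _)] at hhigh
      rw [hz]
      exact ⟨hlow, hhigh⟩
    · intro hlt
      rw [if_neg (by intro hx; exact absurd (lt_trans hlt hx) (lt_irrefl _))] at hlow
      rw [if_pos hlt] at hhigh
      rw [hz]
      linarith
  · intro j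
    have hj1 : (j : ℕ) + 1 ≤ n := j.isLt
    have hlow := gLo_le_Z_diff f1 f2 (k := (j : ℕ)) hj1
    have hhigh := Z_diff_le_gHi f1 f2 (k := (j : ℕ)) hj1
    have hΘj : Θ (j : ℕ) = θ j := by rw [hΘ, ext_lt j.isLt, Fin.eta]
    have hYj : Y (j : ℕ) = y j := by rw [hY, ext_lt j.isLt, Fin.eta]
    rw [gLo, hΘj, hYj] at hlow
    rw [gHi, hΘj, hYj] at hhigh
    refine ⟨?_, ?_, ?_⟩
    · intro hlt
      rw [if_pos (le_of_lt hlt)] at hlow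
      rw [if_neg (not_le.mpr hlt)] at hhigh
      show Zf (j : ℕ) - Zf ((j : ℕ) + 1) = -τ
      linarith
    · intro heq
      rw [if_pos (le_of_eq heq)] at hlow
      rw [if_pos (ge_of_eq heq)] at hhigh
      exact ⟨hlow, hhigh⟩
    · intro hlt
      rw [if_neg (not_le.mpr hlt)] at hlow
      rw [if_pos (le_of_lt hlt)] at hhigh
      show Zf (j : ℕ) - Zf ((j : ℕ) + 1) = 1 - τ
      linarith
  · intro a b hab
    have hcast : ((a.castSucc : Fin (n + 1)) : ℕ) = (a : ℕ) := rfl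
    have hsucc : ((b.succ : Fin (n + 1)) : ℕ) = (b : ℕ) + 1 := Fin.val_succ b
    show ∑ j ∈ Finset.Icc a b, (Zf (j : ℕ) - Zf ((j : ℕ) + 1))
      = Zf ((a.castSucc : Fin (n + 1)) : ℕ) - Zf ((b.succ : Fin (n + 1)) : ℕ)
    rw [hcast, hsucc]
    have hmap : ∑ j ∈ Finset.Icc a b, (Zf (j : ℕ) - Zf ((j : ℕ) + 1))
        = ∑ j ∈ Finset.Icc (a : ℕ) (b : ℕ), (Zf j - Zf (j + 1)) := by
      rw [← Fin.map_valEmbedding_Icc, Finset.sum_map]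
      rfl
    rw [hmap]
    exact sum_Icc_telescope Zf hab

lemma aux2 {lam c : ℝ} (h : |c| ≤ lam) (t : ℝ) : -c * t ≤ lam * |t| :=
  calc -c * t ≤ |(-c) * t| := le_abs_self _
    _ = |c| * |t| := by rw [abs_mul, abs_neg]
    _ ≤ lam * |t| := mul_le_mul_of_nonneg_right h (abs_nonneg t)

lemma sum_shift {n : ℕ} (F : ℕ → ℝ) (h0 : F 0 = 0) :
    ∑ j ∈ range n, F j = ∑ i ∈ range (n - 1), F (i + 1) := by
  cases n with
  | zero => simp
  | succ N =>
    rw [Finset.sum_range_succ' F N, h0, add_zero]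
    simp

lemma sum_drop_last {n : ℕ} (F : ℕ → ℝ) (hF : F (n - 1) = 0) :
    ∑ j ∈ range n, F j = ∑ i ∈ range (n - 1), F i := by
  cases n with
  | zero => simp
  | succ N =>
    rw [Finset.sum_range_succ F N]
    simp only [Nat.succ_sub_one] at hF ⊢
    rw [hF, add_zero]

lemma backward {n : ℕ} {τ lam : ℝ} (hτ0 : 0 < τ) (hτ1 : τ < 1) (hlam : 0 ≤ lam)
    {y θ : Fin n → ℝ} {g : Fin n → ℝ} {z : Fin (n + 1) → ℝ}
    (hd : IsDual τ lam y θ g z) : θ ∈ sol τ lam y := by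
  obtain ⟨hz0, hzlast, hedge, hg, hsum⟩ := hd
  intro η
  set Zn : ℕ → ℝ := fun k => if h : k < n + 1 then z ⟨k, h⟩ else 0 with hZn
  set D : ℕ → ℝ := fun j => ext η j - ext θ j with hD
  have hZn0 : Zn 0 = 0 := by
    rw [hZn]
    dsimp only
    rw [dif_pos (by omega : 0 < n + 1)]
    have e : (⟨0, by omega⟩ : Fin (n + 1)) = 0 := by
      apply Fin.ext; simp
    rw [e]
    exact hz0
  have hZnn : Zn n = 0 := by
    rw [hZn]
    dsimp only
    rw [dif_pos (by omega : n < n + 1)]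
    have e : (⟨n, by omega⟩ : Fin (n + 1)) = Fin.last n := rfl
    rw [e]
    exact hzlast
  have hGZ : ∀ j, ∀ hj : j < n, ext g j = Zn j - Zn (j + 1) := by
    intro j hj
    have h := hsum ⟨j, hj⟩ ⟨j, hj⟩ le_rfl
    rw [Finset.Icc_self, Finset.sum_singleton] at h
    rw [ext_lt hj, hZn]
    dsimp only
    rw [dif_pos (by omega : j < n + 1), dif_pos (by omega : j + 1 < n + 1)]
    have e1 : (⟨j, by omega⟩ : Fin (n + 1)) = (⟨j, hj⟩ : Fin n).castSucc := rfl
    have e2 : (⟨j + 1, by omega⟩ : Fin (n + 1)) = (⟨j, hj⟩ : Fin n).succ := rfl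
    rw [e1, e2]
    exact h
  -- pointwise loss inequality
  have key1 : ∀ j ∈ range n,
      qloss τ (ext y j - ext θ j) + ext g j * D j ≤ qloss τ (ext y j - ext η j) := by
    intro j hj
    have hjn : j < n := Finset.mem_range.mp hj
    obtain ⟨c1, c2, c3⟩ := hg ⟨j, hjn⟩
    have hb : -τ ≤ g ⟨j, hjn⟩ ∧ g ⟨j, hjn⟩ ≤ 1 - τ := by
      rcases lt_trichotomy (θ ⟨j, hjn⟩) (y ⟨j, hjn⟩) with hc | hc | hc
      · rw [c1 hc]; constructor <;> linarith
      · exact c2 hc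
      · rw [c3 hc]; constructor <;> linarith
    have heq : qloss τ (y ⟨j, hjn⟩ - θ ⟨j, hjn⟩)
        = -(g ⟨j, hjn⟩) * (y ⟨j, hjn⟩ - θ ⟨j, hjn⟩) := by
      rcases lt_trichotomy (θ ⟨j, hjn⟩) (y ⟨j, hjn⟩) with hc | hc | hc
      · rw [c1 hc, qloss_eq_if, if_pos (by linarith)]; ring
      · rw [hc, sub_self]
        simp [qloss]
      · rw [c3 hc, qloss_eq_if, if_neg (by linarith)]; ring
    have hge := qloss_ge (y ⟨j, hjn⟩ - η ⟨j, hjn⟩) hb.1 hb.2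
    rw [ext_lt hjn, hD]
    dsimp only
    rw [ext_lt hjn, ext_lt hjn, ext_lt hjn]
    nlinarith [heq, hge]
  -- pointwise TV inequality
  have key2 : ∀ i ∈ range (n - 1),
      lam * |ext θ (i + 1) - ext θ i| - Zn (i + 1) * (D (i + 1) - D i)
        ≤ lam * |ext η (i + 1) - ext η i| := by
    intro i hi
    have hin : i < n - 1 := Finset.mem_range.mp hi
    have h1 : i + 1 < n := by omega
    have h0 : i < n := by omega
    obtain ⟨c1, c2, c3⟩ := hedge ⟨i, h0⟩ h1
    have hzv : Zn (i + 1) = z (⟨i, h0⟩ : Fin n).succ := by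
      rw [hZn]
      dsimp only
      rw [dif_pos (by omega : i + 1 < n + 1)]
      rfl
    have habs : |z (⟨i, h0⟩ : Fin n).succ| ≤ lam
        ∧ lam * |θ ⟨i + 1, h1⟩ - θ ⟨i, h0⟩|
          = -(z (⟨i, h0⟩ : Fin n).succ) * (θ ⟨i + 1, h1⟩ - θ ⟨i, h0⟩) := by
      rcases lt_trichotomy (θ ⟨i + 1, h1⟩) (θ ⟨i, h0⟩) with hc | hc | hc
      · have hzz := c1 hc
        constructor
        · rw [hzz, abs_of_nonneg hlam]
        · rw [hzz, abs_of_nonpos (by linarith)]; ring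
      · have hzz := c2 hc.symm
        constructor
        · exact abs_le.mpr hzz
        · rw [hc, sub_self, abs_zero, mul_zero, mul_zero]
      · have hzz := c3 hc
        constructor
        · rw [hzz, abs_neg, abs_of_nonneg hlam]
        · rw [hzz, abs_of_nonneg (by linarith)]; ring
    have hfact := aux2 habs.1 (η ⟨i + 1, h1⟩ - η ⟨i, h0⟩)
    rw [hzv, hD]
    dsimp only
    rw [ext_lt h1, ext_lt h0, ext_lt h1, ext_lt h0]
    nlinarith [habs.2, hfact]
  -- telescoping identity
  have htel : ∑ j ∈ range n, ext g j * D j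
      = ∑ i ∈ range (n - 1), Zn (i + 1) * (D (i + 1) - D i) := by
    have hGD : ∀ j ∈ range n, ext g j * D j = Zn j * D j - Zn (j + 1) * D j := by
      intro j hj
      rw [hGZ j (Finset.mem_range.mp hj), sub_mul]
    rw [Finset.sum_congr rfl hGD, Finset.sum_sub_distrib]
    have hA : ∑ j ∈ range n, Zn j * D j
        = ∑ i ∈ range (n - 1), Zn (i + 1) * D (i + 1) :=
      sum_shift (fun j => Zn j * D j) (by show Zn 0 * D 0 = 0; rw [hZn0, zero_mul])
    have hB : ∑ j ∈ range n, Zn (j + 1) * D j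
        = ∑ i ∈ range (n - 1), Zn (i + 1) * D i := by
      apply sum_drop_last (fun j => Zn (j + 1) * D j)
      show Zn (n - 1 + 1) * D (n - 1) = 0
      rcases Nat.eq_zero_or_pos n with hn0 | hn0
      · have : D (n - 1) = 0 := by
          rw [hD]
          dsimp only
          unfold ext
          rw [dif_neg (by omega), dif_neg (by omega), sub_zero]
        rw [this, mul_zero]
      · have : n - 1 + 1 = n := by omega
        rw [this, hZnn, zero_mul]
    have hC : ∑ i ∈ range (n - 1), Zn (i + 1) * (D (i + 1) - D i)
        = ∑ i ∈ range (n - 1), Zn (i + 1) * D (i + 1)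
          - ∑ i ∈ range (n - 1), Zn (i + 1) * D i := by
      rw [← Finset.sum_sub_distrib]
      exact Finset.sum_congr rfl fun i _ => by ring
    rw [hA, hB, hC]
  -- assemble
  rw [obj_eq, obj_eq]
  have S1 : (∑ j ∈ range n, qloss τ (ext y j - ext θ j))
      + ∑ j ∈ range n, ext g j * D j
        ≤ ∑ j ∈ range n, qloss τ (ext y j - ext η j) := by
    rw [← Finset.sum_add_distrib]
    exact Finset.sum_le_sum key1
  have S2 : lam * (∑ i ∈ range (n - 1), |ext θ (i + 1) - ext θ i|)
      - ∑ i ∈ range (n - 1), Zn (i + 1) * (D (i + 1) - D i)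
        ≤ lam * ∑ i ∈ range (n - 1), |ext η (i + 1) - ext η i| := by
    rw [Finset.mul_sum, Finset.mul_sum, ← Finset.sum_sub_distrib]
    exact Finset.sum_le_sum key2
  linarith [htel, S1, S2]

end QP

/-- KKT / subgradient characterization of quantile TVD solutions.
`θ ∈ S^τ` if and only if there are dual vectors `g ∈ ℝ^n` and `z ∈ ℝ^{n+1}`
satisfying the admissibility conditions (boundary conditions and sign conditions on
`z`, subgradient conditions on `g`, and the interval identity
`∑_{j=a}^b g_j = z_{a-1} - z_b`). -/
theorem quantile_tvd_kkt_characterization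
    {n : ℕ} (τ lam : ℝ) (hτ0 : 0 < τ) (hτ1 : τ < 1) (hlam : 0 ≤ lam)
    (y θ : Fin n → ℝ) :
    θ ∈ QTVD.sol τ lam y ↔
      ∃ g : Fin n → ℝ, ∃ z : Fin (n + 1) → ℝ, QTVD.IsDual τ lam y θ g z := by
  constructor
  · exact fun hsol => QP.forward hτ0 hτ1 hlam hsol
  · rintro ⟨g, z, hd⟩
    exact QP.backward hτ0 hτ1 hlam hd
end
end

section
/- Fix τ∈(0,1), λ≥0, a location i∈[1:n], a minimizer θ̂∈S^τ with admissible dual variables (g,z), and a discrete interval J=[a:b]⊆[1:n] containing i. Let I=[c:d]⊆J be the largest subinterval of J containing i such that θ̂_u ≥ θ̂_i for all u∈I. Then z_{c−1} − z_d ≤ −2λ·C_{I,J}. -/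
open scoped BigOperators

noncomputable section

/-- Dual variable upper bound, Lemma on `z_{c-1} - z_d`.
Let `θ ∈ S^τ` with admissible dual variables `(g,z)`, let `J = [a:b] ∋ i` and let
`I = [c:d] ⊆ J` be the largest subinterval of `J` containing `i` on which
`θ_u ≥ θ_i`. Then `z_{c-1} - z_d ≤ -2λ C_{I,J}`. -/
theorem dual_variable_upper_bound
    {n : ℕ} (τ lam : ℝ) (hτ0 : 0 < τ) (hτ1 : τ < 1) (hlam : 0 ≤ lam)
    (y θ : Fin n → ℝ) (g : Fin n → ℝ) (z : Fin (n + 1) → ℝ)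
    (hθ : θ ∈ QTVD.sol τ lam y) (hdual : QTVD.IsDual τ lam y θ g z)
    (i a b c d : Fin n)
    (hai : a ≤ i) (hib : i ≤ b)
    (hac : a ≤ c) (hci : c ≤ i) (hid : i ≤ d) (hdb : d ≤ b)
    (hIge : ∀ u ∈ Finset.Icc c d, θ i ≤ θ u)
    (hmaxl : ∀ _h : (a : ℕ) < (c : ℕ),
      θ ⟨(c : ℕ) - 1, lt_of_le_of_lt (Nat.sub_le _ _) c.isLt⟩ < θ i)
    (hmaxr : ∀ h : (d : ℕ) < (b : ℕ),
      θ ⟨(d : ℕ) + 1, Nat.lt_of_le_of_lt h b.isLt⟩ < θ i) :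
    z c.castSucc - z d.succ ≤ -2 * lam * QTVD.Cconst n c d a b := by
  obtain ⟨hz0, hzlast, hzedge, hg, hsum⟩ := hdual
  have hcd : c ≤ d := le_trans hci hid
  have hθic : θ i ≤ θ c := hIge c (Finset.mem_Icc.mpr ⟨le_refl c, hcd⟩)
  have hθid : θ i ≤ θ d := hIge d (Finset.mem_Icc.mpr ⟨hcd, le_refl d⟩)
  have hzbound : ∀ (j : Fin n) (h : (j : ℕ) + 1 < n),
      -lam ≤ z j.succ ∧ z j.succ ≤ lam := by
    intro j h
    rcases lt_trichotomy (θ j) (θ ⟨(j : ℕ) + 1, h⟩) with hlt | heq | hgt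
    · rw [(hzedge j h).2.2 hlt]; constructor <;> linarith
    · exact (hzedge j h).2.1 heq
    · rw [(hzedge j h).1 hgt]; constructor <;> linarith
  -- facts about z c.castSucc
  have hC0 : (c : ℕ) = 0 → z c.castSucc = 0 := by
    intro hc0
    have : c.castSucc = 0 := by ext; simpa using hc0
    rw [this, hz0]
  have hZcB : -lam ≤ z c.castSucc ∧ z c.castSucc ≤ lam := by
    by_cases hc0 : (c : ℕ) = 0
    · rw [hC0 hc0]; constructor <;> linarith
    · have hc1 : 1 ≤ (c : ℕ) := Nat.one_le_iff_ne_zero.mpr hc0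
      have hlt : (c : ℕ) - 1 < n := lt_of_le_of_lt (Nat.sub_le _ _) c.isLt
      have h : ((⟨(c : ℕ) - 1, hlt⟩ : Fin n) : ℕ) + 1 < n := by
        simp only []
        omega
      have hsucc : (⟨(c : ℕ) - 1, hlt⟩ : Fin n).succ = c.castSucc := by
        ext; simp; omega
      rw [← hsucc]; exact hzbound _ h
  have hA : (a : ℕ) < (c : ℕ) → z c.castSucc = -lam := by
    intro hlt
    have hc1 : 1 ≤ (c : ℕ) := by omega
    have hlt' : (c : ℕ) - 1 < n := lt_of_le_of_lt (Nat.sub_le _ _) c.isLt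
    have h : ((⟨(c : ℕ) - 1, hlt'⟩ : Fin n) : ℕ) + 1 < n := by
      simp only []
      omega
    have hj1 : (⟨((⟨(c : ℕ) - 1, hlt'⟩ : Fin n) : ℕ) + 1, h⟩ : Fin n) = c := by
      ext; simp; omega
    have hθlt : θ (⟨(c : ℕ) - 1, hlt'⟩ : Fin n)
        < θ (⟨((⟨(c : ℕ) - 1, hlt'⟩ : Fin n) : ℕ) + 1, h⟩ : Fin n) := by
      rw [hj1]
      exact lt_of_lt_of_le (hmaxl hlt) hθic
    have hz := (hzedge _ h).2.2 hθlt
    have hsucc : (⟨(c : ℕ) - 1, hlt'⟩ : Fin n).succ = c.castSucc := by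
      ext; simp; omega
    rw [← hsucc]; exact hz
  -- facts about z d.succ
  have hD0 : (d : ℕ) = n - 1 → z d.succ = 0 := by
    intro hd0
    have : d.succ = Fin.last n := by
      ext; simp; have := d.isLt; omega
    rw [this, hzlast]
  have hZdB : -lam ≤ z d.succ ∧ z d.succ ≤ lam := by
    by_cases hdn : (d : ℕ) + 1 = n
    · have : d.succ = Fin.last n := by ext; simpa using hdn
      rw [this, hzlast]; constructor <;> linarith
    · have h : (d : ℕ) + 1 < n := by have := d.isLt; omega
      exact hzbound d h
  have hB : (d : ℕ) < (b : ℕ) → z d.succ = lam := by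
    intro hlt
    have h : (d : ℕ) + 1 < n := Nat.lt_of_le_of_lt hlt b.isLt
    have hθlt : θ (⟨(d : ℕ) + 1, h⟩ : Fin n) < θ d :=
      lt_of_lt_of_le (hmaxr hlt) hθid
    exact (hzedge d h).1 hθlt
  obtain ⟨hZc1, hZc2⟩ := hZcB
  obtain ⟨hZd1, hZd2⟩ := hZdB
  have hacN : (a : ℕ) ≤ (c : ℕ) := hac
  have hdbN : (d : ℕ) ≤ (b : ℕ) := hdb
  have hbn : (b : ℕ) < n := b.isLt
  unfold QTVD.Cconst
  split_ifs with h1 h2 h3 h4 h5 h6 h7 h8 h9 h10 h11 h12 h13 h14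
  · rw [hA h2.1, hB h2.2]; linarith
  · linarith
  · have hsplit : ((a : ℕ) < c ∧ (d : ℕ) = b) ∨ ((a : ℕ) = c ∧ (d : ℕ) < b) := by
      omega
    rcases hsplit with ⟨h, _⟩ | ⟨_, h⟩
    · rw [hA h]; linarith
    · rw [hB h]; linarith
  · rw [hA h5.1, hB h5.2]; linarith
  · rw [hC0 (by omega)]; linarith
  · rw [hC0 h7.1, hB h7.2]; linarith
  · have hc : (a : ℕ) < c := by omega
    rw [hA hc]; linarith
  · rw [hA h9.1, hB h9.2]; linarith
  · rw [hD0 (by omega)]; linarith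
  · rw [hA h11.1, hD0 (by omega)]; linarith
  · have hd : (d : ℕ) < b := by omega
    rw [hB hd]; linarith
  · rw [hA h12.1, hB h12.2]; linarith
  · rw [hC0 (by omega), hD0 (by omega)]; linarith
  · have hab : (a : ℕ) = 0 ∧ (b : ℕ) = n - 1 := by omega
    have hsplit : (0 < (c : ℕ) ∧ (d : ℕ) = n - 1) ∨ ((c : ℕ) = 0 ∧ (d : ℕ) < b) := by
      omega
    rcases hsplit with ⟨h, hd⟩ | ⟨h, hd⟩
    · rw [hA (by omega), hD0 hd]; linarith
    · rw [hC0 h, hB hd]; linarith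
end
end

section
/- Fix τ∈(0,1), λ≥0, a minimizer θ̂∈S^τ with admissible dual variables (g,z), and a location i∈[1:n]. Let Ĵ=[a:b] be the largest discrete interval containing i such that θ̂_u ≤ θ̂_i for all u∈Ĵ. Then for every discrete subinterval I=[c:d]⊆Ĵ, it holds that z_{c−1} − z_d ≥ −2λ·C_{I,Ĵ}. -/
open scoped BigOperators

noncomputable section

/-- Dual variable lower bound, Lemma on `z_{c-1} - z_d`.
Let `θ ∈ S^τ` with admissible dual variables `(g,z)` and let `Ĵ = [a:b]` be the
largest discrete interval containing `i` on which `θ_u ≤ θ_i`. Then for every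
subinterval `I = [c:d] ⊆ Ĵ`, `z_{c-1} - z_d ≥ -2λ C_{I,Ĵ}`. -/
theorem dual_variable_lower_bound
    {n : ℕ} (τ lam : ℝ) (hτ0 : 0 < τ) (hτ1 : τ < 1) (hlam : 0 ≤ lam)
    (y θ : Fin n → ℝ) (g : Fin n → ℝ) (z : Fin (n + 1) → ℝ)
    (hθ : θ ∈ QTVD.sol τ lam y) (hdual : QTVD.IsDual τ lam y θ g z)
    (i a b : Fin n) (hai : a ≤ i) (hib : i ≤ b)
    (hJle : ∀ u ∈ Finset.Icc a b, θ u ≤ θ i)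
    (hmaxl : ∀ _h : 0 < (a : ℕ),
      θ i < θ ⟨(a : ℕ) - 1, lt_of_le_of_lt (Nat.sub_le _ _) a.isLt⟩)
    (hmaxr : ∀ h : (b : ℕ) + 1 < n, θ i < θ ⟨(b : ℕ) + 1, h⟩) :
    ∀ c d : Fin n, a ≤ c → c ≤ d → d ≤ b →
      -2 * lam * QTVD.Cconst n c d a b ≤ z c.castSucc - z d.succ := by
  obtain ⟨hz0, hzn, hzedge, hg, hsum⟩ := hdual
  have hn : 0 < n := i.pos
  -- general bound on z
  have hzb : ∀ k : Fin (n + 1), -lam ≤ z k ∧ z k ≤ lam := by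
    intro k
    by_cases hk0 : (k : ℕ) = 0
    · have : k = 0 := Fin.ext hk0
      rw [this, hz0]; constructor <;> linarith
    by_cases hkn : (k : ℕ) = n
    · have : k = Fin.last n := Fin.ext hkn
      rw [this, hzn]; constructor <;> linarith
    · have hk0' : 0 < (k : ℕ) := Nat.pos_of_ne_zero hk0
      have hkn' : (k : ℕ) < n := lt_of_le_of_ne (Nat.lt_succ_iff.mp k.isLt) hkn
      have hj1 : ((⟨(k : ℕ) - 1, by omega⟩ : Fin n) : ℕ) + 1 < n := by
        simp only []; omega
      set j : Fin n := ⟨(k : ℕ) - 1, by omega⟩ with hjdef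
      have hks : k = j.succ := by
        apply Fin.ext; simp [Fin.val_succ, hjdef]; omega
      obtain ⟨h1, h2, h3⟩ := hzedge j hj1
      rcases lt_trichotomy (θ j) (θ ⟨(j : ℕ) + 1, hj1⟩) with h | h | h
      · rw [hks, h3 h]; constructor <;> linarith
      · rw [hks]; exact h2 h
      · rw [hks, h1 h]; constructor <;> linarith
  have hib' : θ b ≤ θ i := hJle b (Finset.mem_Icc.mpr ⟨hai.trans hib, le_refl b⟩)
  have hia' : θ a ≤ θ i := hJle a (Finset.mem_Icc.mpr ⟨le_refl a, hai.trans hib⟩)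
  -- z at left boundary of J
  have hza : 0 < (a : ℕ) → z a.castSucc = lam := by
    intro ha
    have hj1 : ((⟨(a : ℕ) - 1, by omega⟩ : Fin n) : ℕ) + 1 < n := by
      simp only []; omega
    set j : Fin n := ⟨(a : ℕ) - 1, by omega⟩ with hjdef
    have hnext : (⟨(j : ℕ) + 1, hj1⟩ : Fin n) = a := by
      apply Fin.ext; simp [hjdef]; omega
    obtain ⟨h1, h2, h3⟩ := hzedge j hj1
    have hlt : θ ⟨(j : ℕ) + 1, hj1⟩ < θ j := by
      rw [hnext]
      have h2' : θ i < θ j := hmaxl ha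
      linarith
    have := h1 hlt
    have hsucc : j.succ = a.castSucc := by
      apply Fin.ext; simp [Fin.val_succ, hjdef]; omega
    rw [← hsucc]; exact this
  -- z at right boundary of J
  have hzbs : (b : ℕ) + 1 < n → z b.succ = -lam := by
    intro hb
    obtain ⟨h1, h2, h3⟩ := hzedge b hb
    exact h3 (by have := hmaxr hb; linarith)
  intro c d hac hcd hdb
  have hacn : (a : ℕ) ≤ c := hac
  have hcdn : (c : ℕ) ≤ d := hcd
  have hdbn : (d : ℕ) ≤ b := hdb
  obtain ⟨hc1, hc2⟩ := hzb c.castSucc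
  obtain ⟨hd1, hd2⟩ := hzb d.succ
  -- conditional equalities
  have hce0 : (c : ℕ) = 0 → z c.castSucc = 0 := by
    intro h
    have : c.castSucc = 0 := Fin.ext (by simpa using h)
    rw [this, hz0]
  have hdn : (d : ℕ) = n - 1 → z d.succ = 0 := by
    intro h
    have : d.succ = Fin.last n := Fin.ext (by simp [Fin.val_succ]; omega)
    rw [this, hzn]
  have hclam : 0 < (a : ℕ) → (c : ℕ) = (a : ℕ) → z c.castSucc = lam := by
    intro h1 h2
    have : c = a := Fin.ext h2
    rw [this]; exact hza h1
  have hdlam : (b : ℕ) < n - 1 → (d : ℕ) = (b : ℕ) → z d.succ = -lam := by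
    intro h1 h2
    have : d = b := Fin.ext h2
    rw [this]; exact hzbs (by omega)
  unfold QTVD.Cconst
  by_cases hA : 0 < (a : ℕ) ∧ (b : ℕ) < n - 1
  · rw [if_pos hA]
    by_cases h1 : (a : ℕ) < c ∧ (d : ℕ) < b
    · rw [if_pos h1]; linarith
    · rw [if_neg h1]
      by_cases h2 : (c : ℕ) = a ∧ (d : ℕ) = b
      · rw [if_pos h2]
        rw [hclam hA.1 h2.1, hdlam hA.2 h2.2]; ring_nf; linarith
      · rw [if_neg h2]
        rcases lt_or_eq_of_le hdbn with hd | hd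
        · have hc : (c : ℕ) = a := by omega
          rw [hclam hA.1 hc]; linarith
        · have hc : (a : ℕ) < c := by omega
          rw [hdlam hA.2 hd]; linarith
  · rw [if_neg hA]
    by_cases hB : (a : ℕ) = 0 ∧ (b : ℕ) < n - 1
    · rw [if_pos hB]
      by_cases h1 : (a : ℕ) < c ∧ (d : ℕ) < b
      · rw [if_pos h1]; linarith
      · rw [if_neg h1]
        by_cases h2 : (c : ℕ) = a ∧ (d : ℕ) = b
        · rw [if_pos h2]
          rw [hce0 (by omega), hdlam hB.2 h2.2]; ring_nf; linarith
        · rw [if_neg h2]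
          by_cases h3 : (c : ℕ) = 0 ∧ (d : ℕ) < b
          · rw [if_pos h3]
            rw [hce0 h3.1]; ring_nf; linarith
          · rw [if_neg h3]
            have hd : (d : ℕ) = b := by omega
            rw [hdlam hB.2 hd]; linarith
    · rw [if_neg hB]
      by_cases hC : 0 < (a : ℕ) ∧ (b : ℕ) = n - 1
      · rw [if_pos hC]
        by_cases h1 : (a : ℕ) < c ∧ (d : ℕ) < b
        · rw [if_pos h1]; linarith
        · rw [if_neg h1]
          by_cases h2 : (c : ℕ) = a ∧ (d : ℕ) = b
          · rw [if_pos h2]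
            rw [hclam hC.1 h2.1, hdn (by omega)]; ring_nf; linarith
          · rw [if_neg h2]
            by_cases h3 : (a : ℕ) < c ∧ (d : ℕ) = b
            · rw [if_pos h3]
              rw [hdn (by omega)]; ring_nf; linarith
            · rw [if_neg h3]
              have hc : (c : ℕ) = a := by omega
              rw [hclam hC.1 hc]; linarith
      · rw [if_neg hC]
        have ha0 : (a : ℕ) = 0 := by
          by_contra h
          have hbn : (b : ℕ) ≤ n - 1 := by omega
          rcases lt_or_eq_of_le hbn with h' | h'
          · exact hA ⟨Nat.pos_of_ne_zero h, h'⟩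
          · exact hC ⟨Nat.pos_of_ne_zero h, h'⟩
        have hbn1 : (b : ℕ) = n - 1 := by
          by_contra h
          exact hB ⟨ha0, by omega⟩
        by_cases h1 : (a : ℕ) < c ∧ (d : ℕ) < b
        · rw [if_pos h1]; linarith
        · rw [if_neg h1]
          by_cases h2 : (c : ℕ) = a ∧ (d : ℕ) = b
          · rw [if_pos h2]
            rw [hce0 (by omega), hdn (by omega)]; ring_nf; linarith
          · rw [if_neg h2]
            rcases lt_or_eq_of_le hdbn with hd | hd
            · have hc : (c : ℕ) = 0 := by omega
              rw [hce0 hc]; ring_nf; linarith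
            · rw [hdn (by omega)]; ring_nf; linarith
end
end

section
/- (One order statistic upgrade.) Fix τ∈(0,1), λ≥0, and a location i∈[1:n]. Let θ̂^max_i := max{θ_i : θ∈S^τ} and let θ̂^max∈S^τ attain this value at location i. Let Ĵ=[a:b] be the largest discrete interval containing i such that θ̂^max_u ≤ θ̂^max_i for all u∈Ĵ. Fix any discrete interval I=[c:d]⊆Ĵ with i∈I and suppose that u^τ_{I,Ĵ} is an integer with 0 ≤ u^τ_{I,Ĵ} < |I|. Then θ̂^max_i ≥ y_{I,(u^τ_{I,Ĵ}+1)}. -/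
open scoped BigOperators

noncomputable section

/-! Suppose `y_{I,(K+1)} > θ̂_i` and raise `θ̂` by a small `ε > 0` on `I`. Since `θ̂ ≤ θ̂_i` on `Ĵ`,
at least `|I| - K` points of `I` keep a nonnegative residual and each lowers the loss by `τε`,
while every other point of `I` raises it by at most `(1 - τ)ε`. The total variation changes only
across the two boundary edges of `I`, by at most `2 C_{I,Ĵ} ε` in total: an edge leaving `Ĵ`
climbs to a value above `θ̂_i + ε`, so its jump shrinks. As `K = τ|I| - 2λ C_{I,Ĵ}`, the objective
does not increase, so the raised vector is again a solution, contradicting the maximality of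
`θ̂_i`. -/

theorem List.Pairwise.length_sub_le_countP_getElem_le {α : Type*} [Preorder α] [DecidableLE α]
    {l : List α} (hl : l.Pairwise (· ≤ ·)) {k : ℕ} (hk : k < l.length) :
    l.length - k ≤ l.countP (fun x => l[k] ≤ x) := by
  have hdrop : ∀ x ∈ l.drop k, l[k] ≤ x := by
    intro x hx
    obtain ⟨j, hj, rfl⟩ := List.mem_iff_getElem.mp hx
    rw [List.getElem_drop]
    exact hl.rel_get_of_le (a := ⟨k, hk⟩) (b := ⟨k + j, by simp at hj; omega⟩)
      (Fin.le_def.mpr (Nat.le_add_right k j))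
  calc l.length - k = (l.drop k).countP (fun x => l[k] ≤ x) := by
        rw [List.countP_eq_length.mpr (by simpa using hdrop), List.length_drop]
    _ ≤ l.countP (fun x => l[k] ≤ x) := (List.drop_sublist k l).countP_le

theorem exists_pos_forall_le {p : Prop} (f : p → ℝ) (hf : ∀ h, 0 < f h) :
    ∃ δ > 0, ∀ h, δ ≤ f h := by
  by_cases hp : p
  · exact ⟨f hp, hf hp, fun _ => le_rfl⟩
  · exact ⟨1, one_pos, fun h => absurd h hp⟩

namespace QTVD

variable {n : ℕ}

open Finset

theorem cast_card_Icc {c d : Fin n} (hcd : c ≤ d) : (#(Icc c d) : ℝ) = d - c + 1 := by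
  rw [Fin.card_Icc, Nat.cast_sub (by omega)]
  push_cast
  ring

theorem exists_orderStat_eq_of_lt_card (y : Fin n → ℝ) (I : Finset (Fin n)) {k : ℕ}
    (hk : k < #I) :
    ∃ v : ℝ, orderStat y I (k + 1) = v ∧ #I - k ≤ #{u ∈ I | v ≤ y u} := by
  set l := (I.val.map y).sort (· ≤ ·)
  have hkl : k < l.length := by simpa [l] using hk
  refine ⟨l[k], ?_, ?_⟩
  · rw [orderStat, if_neg (by omega), if_neg (by omega)]
    simp [List.getElem?_eq_getElem hkl, l]
  · calc #I - k = l.length - k := by simp [l]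
      _ ≤ l.countP (fun x => l[k] ≤ x) :=
        (Multiset.pairwise_sort _ _).length_sub_le_countP_getElem_le hkl
      _ = #{u ∈ I | l[k] ≤ y u} := by
        rw [← Multiset.coe_countP, Multiset.sort_eq, Multiset.countP_map]
        rfl

theorem qloss_of_nonneg (τ : ℝ) {x : ℝ} (hx : 0 ≤ x) : qloss τ x = τ * x :=
  max_eq_left (by nlinarith)

theorem qloss_sub_le (τ x : ℝ) {ε : ℝ} (hε : 0 ≤ ε) :
    qloss τ (x - ε) ≤ qloss τ x + (1 - τ) * ε := by
  unfold qloss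
  have := le_max_left (τ * x) ((τ - 1) * x)
  have := le_max_right (τ * x) ((τ - 1) * x)
  apply max_le <;> nlinarith

def raiseOn (θ : Fin n → ℝ) (I : Finset (Fin n)) (ε : ℝ) : Fin n → ℝ :=
  fun u => if u ∈ I then θ u + ε else θ u

theorem raiseOn_of_mem {θ : Fin n → ℝ} {I : Finset (Fin n)} {ε : ℝ} {u : Fin n}
    (hu : u ∈ I) : raiseOn θ I ε u = θ u + ε := if_pos hu

theorem raiseOn_of_notMem {θ : Fin n → ℝ} {I : Finset (Fin n)} {ε : ℝ} {u : Fin n}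
    (hu : u ∉ I) : raiseOn θ I ε u = θ u := if_neg hu

/-- Raising `θ` on `I` lowers the loss by `τε` wherever the residual stays nonnegative and raises
it by at most `(1 - τ)ε` elsewhere. -/
theorem sum_qloss_raiseOn_le (τ : ℝ) (y θ : Fin n → ℝ) (I : Finset (Fin n)) {ε : ℝ}
    (hε : 0 ≤ ε) :
    ∑ u, qloss τ (y u - raiseOn θ I ε u) ≤
      ∑ u, qloss τ (y u - θ u) + ε * ((1 - τ) * #I - #{u ∈ I | θ u + ε ≤ y u}) := by
  have hpoint : ∀ u, qloss τ (y u - raiseOn θ I ε u) ≤ qloss τ (y u - θ u) +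
      if u ∈ I then (1 - τ) * ε - (if θ u + ε ≤ y u then ε else 0) else 0 := by
    intro u
    by_cases hu : u ∈ I
    · simp only [raiseOn, if_pos hu, ← sub_sub]
      split_ifs with hy
      · rw [qloss_of_nonneg τ (by linarith), qloss_of_nonneg τ (by linarith)]
        linarith
      · linarith [qloss_sub_le τ (y u - θ u) hε]
    · simp [raiseOn, hu]
  calc ∑ u, qloss τ (y u - raiseOn θ I ε u)
      ≤ ∑ u, (qloss τ (y u - θ u) +
          if u ∈ I then (1 - τ) * ε - (if θ u + ε ≤ y u then ε else 0) else 0) :=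
        sum_le_sum fun u _ => hpoint u
    _ = _ := by
      rw [sum_add_distrib, sum_ite_mem, univ_inter, sum_sub_distrib, ← sum_filter]
      simp only [sum_const, nsmul_eq_mul]
      ring

def jump (θ : Fin n → ℝ) (j : Fin n) : ℝ :=
  if h : (j : ℕ) + 1 < n then |θ ⟨(j : ℕ) + 1, h⟩ - θ j| else 0

theorem TV_eq_sum_jump (θ : Fin n → ℝ) : TV θ = ∑ j, jump θ j := rfl

/-- When `θ` is raised by `ε` on `[c:d] ⊆ [a:b]` while its neighbours outside `[a:b]` stay at
least `ε` above, the jump across the left edge of `[c:d]` changes by at most `ε * leftSign a c`: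
there is no such edge if `c = 0`, it shrinks if `c = a`, and it can grow otherwise.
`rightSign` is the mirror image. -/
def leftSign (a c : ℕ) : ℝ := if c = 0 then 0 else if c = a then -1 else 1

def rightSign (n b d : ℕ) : ℝ := if d + 1 = n then 0 else if d = b then -1 else 1

/-- `C_{I,J}` is half the total sign of the two boundary edges of `I` relative to `J`. -/
theorem two_mul_Cconst {a b c d : ℕ} (hac : a ≤ c) (hcd : c ≤ d) (hdb : d ≤ b)
    (hb : b < n) :
    2 * Cconst n c d a b = leftSign a c + rightSign n b d := by
  unfold Cconst leftSign rightSign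
  split_ifs <;> first | (exfalso; omega) | norm_num

theorem sum_ite_val_add_one_eq {M : Type*} [AddCommMonoid M] (c : Fin n) {x : M}
    (hx : (c : ℕ) = 0 → x = 0) : ∑ j : Fin n, (if (j : ℕ) + 1 = c then x else 0) = x := by
  by_cases hc : (c : ℕ) = 0
  · rw [hx hc]
    simp
  · rw [sum_eq_single_of_mem ⟨c - 1, by omega⟩ (mem_univ _) fun j _ hj => if_neg ?_]
    · exact if_pos (by simp; omega)
    · exact fun h => hj (Fin.ext (by simp; omega))

theorem jump_raiseOn_Icc_of_ne (θ : Fin n → ℝ) {c d : Fin n} (ε : ℝ) {j : Fin n}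
    (hL : (j : ℕ) + 1 ≠ c) (hR : j ≠ d) : jump (raiseOn θ (Icc c d) ε) j = jump θ j := by
  unfold jump
  split_ifs with hj
  · by_cases hin : j ∈ Icc c d
    · rw [raiseOn_of_mem hin,
        raiseOn_of_mem (by simp only [mem_Icc, Fin.le_def] at hin ⊢; omega),
        add_sub_add_right_eq_sub]
    · rw [raiseOn_of_notMem hin,
        raiseOn_of_notMem (by simp only [mem_Icc, Fin.le_def] at hin ⊢; omega)]
  · rfl

theorem jump_raiseOn_Icc_le (θ : Fin n → ℝ) {a b c d : Fin n} (hcd : c ≤ d) {ε : ℝ}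
    (hε : 0 ≤ ε) (hleft : ∀ h : 0 < (a : ℕ), θ c + ε ≤ θ ⟨(a : ℕ) - 1, by omega⟩)
    (hright : ∀ h : (b : ℕ) + 1 < n, θ d + ε ≤ θ ⟨(b : ℕ) + 1, h⟩) (j : Fin n) :
    jump (raiseOn θ (Icc c d) ε) j ≤ jump θ j + ε *
      ((if (j : ℕ) + 1 = c then leftSign a c else 0) +
        (if j = d then rightSign n b d else 0)) := by
  by_cases hinner : (j : ℕ) + 1 ≠ c ∧ j ≠ d
  · rw [jump_raiseOn_Icc_of_ne θ ε hinner.1 hinner.2, if_neg hinner.1, if_neg hinner.2]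
    simp
  unfold jump leftSign rightSign
  by_cases hj : (j : ℕ) + 1 < n
  swap
  · rw [dif_neg hj, dif_neg hj, if_neg (show (j : ℕ) + 1 ≠ c by omega)]
    split_ifs <;> first | (exfalso; omega) | simp
  rw [dif_pos hj, dif_pos hj]
  set j' : Fin n := ⟨(j : ℕ) + 1, hj⟩
  have hj' : (j' : ℕ) = j + 1 := rfl
  set x := θ j' - θ j
  by_cases hL : (j : ℕ) + 1 = c
  · rw [raiseOn_of_mem (by rw [mem_Icc]; omega), raiseOn_of_notMem (by rw [mem_Icc]; omega),
      if_pos hL, if_neg (show (c : ℕ) ≠ 0 by omega), if_neg (show j ≠ d by omega), add_zero,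
      add_sub_right_comm]
    split_ifs with hca
    · have hja : j = ⟨(a : ℕ) - 1, by omega⟩ := Fin.ext (by simp; omega)
      have hx : x ≤ -ε := by
        have := hleft (by omega)
        simp only [x, show j' = c from Fin.ext hL, hja]
        linarith
      rw [abs_of_nonpos (by linarith), abs_of_nonpos (by linarith)]
      linarith
    · linarith [abs_add_le x ε, abs_of_nonneg hε]
  · have hR : j = d := by omega
    rw [raiseOn_of_notMem (by rw [mem_Icc]; omega), raiseOn_of_mem (by rw [mem_Icc]; omega),
      if_neg hL, if_pos hR, if_neg (show (d : ℕ) + 1 ≠ n by omega), zero_add,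
      sub_add_eq_sub_sub]
    split_ifs with hdb
    · have hjb : j' = ⟨(b : ℕ) + 1, by omega⟩ := Fin.ext (by simp [j']; omega)
      have hx : ε ≤ x := by
        have := hright (by omega)
        simp only [x, hR, hjb]
        linarith
      rw [abs_of_nonneg (by linarith), abs_of_nonneg (by linarith)]
      linarith
    · linarith [abs_sub x ε, abs_of_nonneg hε]

theorem TV_raiseOn_Icc_le (θ : Fin n → ℝ) {a b c d : Fin n} (hac : a ≤ c) (hcd : c ≤ d)
    (hdb : d ≤ b) {ε : ℝ} (hε : 0 ≤ ε)
    (hleft : ∀ h : 0 < (a : ℕ), θ c + ε ≤ θ ⟨(a : ℕ) - 1, by omega⟩)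
    (hright : ∀ h : (b : ℕ) + 1 < n, θ d + ε ≤ θ ⟨(b : ℕ) + 1, h⟩) :
    TV (raiseOn θ (Icc c d) ε) ≤ TV θ + 2 * Cconst n c d a b * ε := by
  rw [TV_eq_sum_jump, TV_eq_sum_jump]
  refine (sum_le_sum fun j _ => jump_raiseOn_Icc_le θ hcd hε hleft hright j).trans_eq ?_
  rw [sum_add_distrib, ← mul_sum, sum_add_distrib,
    sum_ite_val_add_one_eq c fun h => by rw [leftSign, if_pos h],
    sum_ite_eq', if_pos (mem_univ _), two_mul_Cconst hac hcd hdb b.isLt, mul_comm]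

theorem obj_raiseOn_Icc_le (τ : ℝ) {lam : ℝ} (hlam : 0 ≤ lam) (y θ : Fin n → ℝ)
    {a b c d : Fin n} (hac : a ≤ c) (hcd : c ≤ d) (hdb : d ≤ b) {ε : ℝ} (hε : 0 ≤ ε)
    (hleft : ∀ h : 0 < (a : ℕ), θ c + ε ≤ θ ⟨(a : ℕ) - 1, by omega⟩)
    (hright : ∀ h : (b : ℕ) + 1 < n, θ d + ε ≤ θ ⟨(b : ℕ) + 1, h⟩) :
    obj τ lam y (raiseOn θ (Icc c d) ε) ≤ obj τ lam y θ + ε * ((1 - τ) * #(Icc c d) -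
      #{u ∈ Icc c d | θ u + ε ≤ y u} + 2 * lam * Cconst n c d a b) := by
  have hloss := sum_qloss_raiseOn_le τ y θ (Icc c d) hε
  have hTV := mul_le_mul_of_nonneg_left (TV_raiseOn_Icc_le θ hac hcd hdb hε hleft hright) hlam
  unfold obj
  linarith

theorem raiseOn_Icc_mem_sol {τ lam : ℝ} (hlam : 0 ≤ lam) {y θ : Fin n → ℝ}
    (hθ : θ ∈ sol τ lam y) {a b c d : Fin n} (hac : a ≤ c) (hcd : c ≤ d) (hdb : d ≤ b)
    {ε : ℝ} (hε : 0 ≤ ε) (hleft : ∀ h : 0 < (a : ℕ), θ c + ε ≤ θ ⟨(a : ℕ) - 1, by omega⟩)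
    (hright : ∀ h : (b : ℕ) + 1 < n, θ d + ε ≤ θ ⟨(b : ℕ) + 1, h⟩)
    (hcount : (d : ℝ) - c + 1 - uIJ τ lam n c d a b ≤ #{u ∈ Icc c d | θ u + ε ≤ y u}) :
    raiseOn θ (Icc c d) ε ∈ sol τ lam y := by
  have hgain : (1 - τ) * #(Icc c d) - #{u ∈ Icc c d | θ u + ε ≤ y u} +
      2 * lam * Cconst n c d a b ≤ 0 := by
    rw [uIJ] at hcount
    rw [cast_card_Icc hcd]
    linarith
  intro η
  calc obj τ lam y (raiseOn θ (Icc c d) ε)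
      ≤ obj τ lam y θ + ε * ((1 - τ) * #(Icc c d) -
          #{u ∈ Icc c d | θ u + ε ≤ y u} + 2 * lam * Cconst n c d a b) :=
        obj_raiseOn_Icc_le τ hlam y θ hac hcd hdb hε hleft hright
    _ ≤ obj τ lam y θ := add_le_of_nonpos_right (mul_nonpos_of_nonneg_of_nonpos hε hgain)
    _ ≤ obj τ lam y η := hθ η

end QTVD

theorem one_order_statistic_upgrade_general
    {n : ℕ} (τ lam : ℝ) (hlam : 0 ≤ lam)
    (y : Fin n → ℝ) (i : Fin n) (θmax : Fin n → ℝ)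
    (hθ : θmax ∈ QTVD.sol τ lam y)
    (hattain : ∀ θ ∈ QTVD.sol τ lam y, θ i ≤ θmax i)
    (a b : Fin n)
    (hJle : ∀ u ∈ Finset.Icc a b, θmax u ≤ θmax i)
    (hmaxl : ∀ _h : 0 < (a : ℕ),
      θmax i < θmax ⟨(a : ℕ) - 1, lt_of_le_of_lt (Nat.sub_le _ _) a.isLt⟩)
    (hmaxr : ∀ h : (b : ℕ) + 1 < n, θmax i < θmax ⟨(b : ℕ) + 1, h⟩)
    (c d : Fin n) (hac : a ≤ c) (hci : c ≤ i) (hid : i ≤ d) (hdb : d ≤ b)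
    (K : ℤ) (hK : (K : ℝ) = QTVD.uIJ τ lam n c d a b)
    (hK0 : 0 ≤ K) (hKlt : QTVD.uIJ τ lam n c d a b < (d : ℝ) - (c : ℝ) + 1) :
    QTVD.orderStat y (Finset.Icc c d) (K + 1) ≤ ((θmax i : ℝ) : EReal) := by
  open QTVD Finset in
  by_contra hcon
  lift K to ℕ using hK0 with k
  push_cast at hK
  have hk : (k : ℝ) < #(Icc c d) := by rw [cast_card_Icc (hci.trans hid), hK]; exact hKlt
  obtain ⟨v, hv, hcount⟩ := exists_orderStat_eq_of_lt_card y (Icc c d) (by exact_mod_cast hk)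
  have hiv : θmax i < v := by
    rw [hv, not_le] at hcon
    exact_mod_cast hcon
  obtain ⟨δl, hδl, hl⟩ := exists_pos_forall_le _ fun h => sub_pos.2 (hmaxl h)
  obtain ⟨δr, hδr, hr⟩ := exists_pos_forall_le _ fun h => sub_pos.2 (hmaxr h)
  set ε := min (v - θmax i) (min δl δr)
  have hε : 0 < ε := lt_min (by linarith) (lt_min hδl hδr)
  have hεv : ε ≤ v - θmax i := min_le_left _ _
  have hεl : ε ≤ δl := (min_le_right _ _).trans (min_le_left _ _)
  have hεr : ε ≤ δr := (min_le_right _ _).trans (min_le_right _ _)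
  have hIJ : ∀ u ∈ Icc c d, θmax u ≤ θmax i := fun u hu =>
    hJle u (Icc_subset_Icc hac hdb hu)
  have hraised : #{u ∈ Icc c d | v ≤ y u} ≤ #{u ∈ Icc c d | θmax u + ε ≤ y u} :=
    card_le_card (monotone_filter_right _ fun u hu hvu => by linarith [hIJ u hu])
  have hkept : (#(Icc c d) : ℝ) - k ≤ #{u ∈ Icc c d | θmax u + ε ≤ y u} := by
    rw [← Nat.cast_sub (by exact_mod_cast hk.le)]
    exact_mod_cast hcount.trans hraised
  have hsol := raiseOn_Icc_mem_sol hlam hθ hac (hci.trans hid) hdb hε.le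
    (fun h => by linarith [hIJ c (by simp [hci.trans hid]), hl h])
    (fun h => by linarith [hIJ d (by simp [hci.trans hid]), hr h])
    (by rwa [← cast_card_Icc (hci.trans hid), ← hK])
  have hi := hattain _ hsol
  rw [raiseOn_of_mem (by simp [hci, hid])] at hi
  linarith

/-- One order statistic upgrade.
Let `θmax ∈ S^τ` attain the maximal feasible value at location `i`, let
`Ĵ = [a:b]` be the largest interval containing `i` on which `θmax_u ≤ θmax_i`,
and let `I = [c:d] ⊆ Ĵ` contain `i` with `u^τ_{I,Ĵ}` an integer `K` satisfying
`0 ≤ K < |I|`. Then `θmax_i ≥ y_{I,(K+1)}`. -/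
theorem one_order_statistic_upgrade
    {n : ℕ} (τ lam : ℝ) (hτ0 : 0 < τ) (hτ1 : τ < 1) (hlam : 0 ≤ lam)
    (y : Fin n → ℝ) (i : Fin n) (θmax : Fin n → ℝ)
    (hθ : θmax ∈ QTVD.sol τ lam y)
    (hattain : ∀ θ ∈ QTVD.sol τ lam y, θ i ≤ θmax i)
    (a b : Fin n) (hai : a ≤ i) (hib : i ≤ b)
    (hJle : ∀ u ∈ Finset.Icc a b, θmax u ≤ θmax i)
    (hmaxl : ∀ _h : 0 < (a : ℕ),
      θmax i < θmax ⟨(a : ℕ) - 1, lt_of_le_of_lt (Nat.sub_le _ _) a.isLt⟩)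
    (hmaxr : ∀ h : (b : ℕ) + 1 < n, θmax i < θmax ⟨(b : ℕ) + 1, h⟩)
    (c d : Fin n) (hac : a ≤ c) (hci : c ≤ i) (hid : i ≤ d) (hdb : d ≤ b)
    (K : ℤ) (hK : (K : ℝ) = QTVD.uIJ τ lam n c d a b)
    (hK0 : 0 ≤ K) (hKlt : QTVD.uIJ τ lam n c d a b < (d : ℝ) - (c : ℝ) + 1) :
    QTVD.orderStat y (Finset.Icc c d) (K + 1) ≤ ((θmax i : ℝ) : EReal) :=
  one_order_statistic_upgrade_general τ lam hlam y i θmax hθ hattain a b hJle hmaxl hmaxr c d hac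
    hci hid hdb K hK hK0 hKlt
end
end

section
/- Let θ̂∈ℝ^n, let I=[c:d]⊆[1:n] be a discrete interval, and for t≥0 set θ(t):=θ̂+t·1_I (add t to the coordinates in I). Then there exists t0>0 such that for all t∈[0,t0], TV(θ(t)) − TV(θ(0)) = (σ_{c−1}·1{c≠1} − σ_d·1{d≠n})·t, where (when c>1) σ_{c−1}:=sign_+(θ̂_c−θ̂_{c−1}) and (when d<n) σ_d:=sign_−(θ̂_{d+1}−θ̂_d), with sign_+(x)=+1 if x≥0 and −1 if x<0, and sign_−(x)=+1 if x>0 and −1 if x≤0. In particular, t↦TV(θ(t)) is affine on [0,t0]. -/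
open scoped BigOperators

noncomputable section

namespace QTVD

lemma abs_add_sub_eq (x t : ℝ) (ht : 0 ≤ t) (ht2 : x < 0 → t ≤ -x) :
    |x + t| - |x| = signP x * t := by
  unfold signP
  rcases le_or_gt 0 x with hx | hx
  · rw [if_pos hx, abs_of_nonneg hx, abs_of_nonneg (by linarith)]; ring
  · rw [if_neg (not_le.mpr hx), abs_of_neg hx, abs_of_nonpos (by have := ht2 hx; linarith)]
    ring

lemma abs_sub_sub_eq (x t : ℝ) (ht : 0 ≤ t) (ht2 : 0 < x → t ≤ x) :
    |x - t| - |x| = -signM x * t := by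
  unfold signM
  rcases lt_or_ge 0 x with hx | hx
  · rw [if_pos hx, abs_of_pos hx, abs_of_nonneg (by have := ht2 hx; linarith)]; ring
  · rw [if_neg (not_lt.mpr hx), abs_of_nonpos hx, abs_of_nonpos (by linarith)]; ring

end QTVD

/-- Local affineness of the TV penalty under constant
perturbation on an interval. For `θ ∈ ℝ^n` and a discrete interval `I = [c:d]`,
there is `t0 > 0` such that for all `t ∈ [0, t0]`,
`TV(θ + t·1_I) - TV(θ) = (σ_{c-1}·1{c ≠ 1} - σ_d·1{d ≠ n})·t`;
in particular `t ↦ TV(θ + t·1_I)` is affine on `[0, t0]`. -/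
theorem tv_locally_affine_under_interval_perturbation
    {n : ℕ} (θ : Fin n → ℝ) (c d : Fin n) (hcd : c ≤ d) :
    ∃ t0 : ℝ, 0 < t0 ∧ ∀ t ∈ Set.Icc (0 : ℝ) t0,
      QTVD.TV (fun j => θ j + if j ∈ Finset.Icc c d then t else 0) - QTVD.TV θ =
        ((if 0 < (c : ℕ) then
            QTVD.signP (θ c - θ ⟨(c : ℕ) - 1, lt_of_le_of_lt (Nat.sub_le _ _) c.isLt⟩)
          else 0)
         - (if h : (d : ℕ) + 1 < n then QTVD.signM (θ ⟨(d : ℕ) + 1, h⟩ - θ d) else 0)) * t := by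
  classical
  set cm : Fin n := ⟨(c : ℕ) - 1, lt_of_le_of_lt (Nat.sub_le _ _) c.isLt⟩ with hcm
  set A : ℝ := (if 0 < (c : ℕ) then QTVD.signP (θ c - θ cm) else 0) with hA
  set B : ℝ := (if h : (d : ℕ) + 1 < n then QTVD.signM (θ ⟨(d : ℕ) + 1, h⟩ - θ d) else 0)
    with hB
  set eL : ℝ := if θ c - θ cm < 0 then -(θ c - θ cm) else 1 with heL
  set eR : ℝ := if h : (d : ℕ) + 1 < n then
      (if 0 < θ ⟨(d : ℕ) + 1, h⟩ - θ d then θ ⟨(d : ℕ) + 1, h⟩ - θ d else 1) else 1 with heR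
  have heLpos : 0 < eL := by
    rw [heL]; split <;> [linarith [show θ c - θ cm < 0 from by assumption]; norm_num]
  have heRpos : 0 < eR := by
    rw [heR]; split
    · split <;> [linarith [show (0:ℝ) < _ from by assumption]; norm_num]
    · norm_num
  refine ⟨min 1 (min eL eR), lt_min one_pos (lt_min heLpos heRpos), ?_⟩
  rintro t ⟨ht0, ht1⟩
  have htL : t ≤ eL := le_trans ht1 (le_trans (min_le_right _ _) (min_le_left _ _))
  have htR : t ≤ eR := le_trans ht1 (le_trans (min_le_right _ _) (min_le_right _ _))
  have hcdn : (c : ℕ) ≤ (d : ℕ) := hcd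
  unfold QTVD.TV
  rw [← Finset.sum_sub_distrib]
  have key : ∀ i : Fin n,
      ((if h : (i : ℕ) + 1 < n then
          |(θ ⟨(i:ℕ)+1, h⟩ + if (⟨(i:ℕ)+1, h⟩ : Fin n) ∈ Finset.Icc c d then t else 0) -
            (θ i + if i ∈ Finset.Icc c d then t else 0)| else 0) -
        (if h : (i : ℕ) + 1 < n then |θ ⟨(i:ℕ)+1, h⟩ - θ i| else 0)) =
      (if (i : ℕ) + 1 = (c : ℕ) then A * t else 0) +
      (if i = d then -B * t else 0) := by
    intro i
    by_cases h : (i : ℕ) + 1 < n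
    · rw [dif_pos h, dif_pos h]
      have hmem : ∀ j : Fin n, j ∈ Finset.Icc c d ↔ (c : ℕ) ≤ (j : ℕ) ∧ (j : ℕ) ≤ (d : ℕ) := by
        intro j; rw [Finset.mem_Icc]; exact Iff.rfl
      by_cases hp : (c : ℕ) ≤ (i : ℕ) ∧ (i : ℕ) ≤ (d : ℕ) <;>
        by_cases hq : (c : ℕ) ≤ (i : ℕ) + 1 ∧ (i : ℕ) + 1 ≤ (d : ℕ)
      · -- both inside
        rw [if_pos ((hmem _).mpr hp), if_pos ((hmem _).mpr hq)]
        rw [if_neg (by omega), if_neg (by rintro rfl; omega)]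
        ring_nf
      · -- i inside, i+1 outside: i = d
        have hid' : i = d := Fin.ext (by omega)
        subst hid'
        rw [if_pos ((hmem _).mpr hp), if_neg (fun hh => hq ((hmem _).mp hh))]
        rw [if_neg (by omega), if_pos rfl]
        have hB' : B = QTVD.signM (θ ⟨(i:ℕ)+1, h⟩ - θ i) := by rw [hB, dif_pos h]
        have heR' : eR = if 0 < θ ⟨(i:ℕ)+1, h⟩ - θ i then θ ⟨(i:ℕ)+1, h⟩ - θ i else 1 := by
          rw [heR, dif_pos h]
        have hkey := QTVD.abs_sub_sub_eq (θ ⟨(i:ℕ)+1, h⟩ - θ i) t ht0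
          (fun hx => by rw [heR', if_pos hx] at htR; exact htR)
        rw [hB']
        simp only [add_zero, zero_add]
        rw [show θ ⟨(i:ℕ)+1, h⟩ - (θ i + t) = (θ ⟨(i:ℕ)+1, h⟩ - θ i) - t from by ring, hkey]
      · -- i outside, i+1 inside: i+1 = c
        have hic : (i : ℕ) + 1 = (c : ℕ) := by omega
        rw [if_neg (fun hh => hp ((hmem _).mp hh)), if_pos ((hmem _).mpr hq)]
        rw [if_pos hic, if_neg (by rintro rfl; omega)]
        have hc0 : 0 < (c : ℕ) := by omega
        have hθc : θ c = θ ⟨(i:ℕ)+1, h⟩ := by congr 1; exact Fin.ext hic.symm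
        have hθm : θ cm = θ i := by
          congr 1; exact Fin.ext (show (c:ℕ) - 1 = (i:ℕ) from by omega)
        have hA' : A = QTVD.signP (θ ⟨(i:ℕ)+1, h⟩ - θ i) := by
          rw [hA, if_pos hc0, hθc, hθm]
        have heL' : eL = if θ ⟨(i:ℕ)+1, h⟩ - θ i < 0 then -(θ ⟨(i:ℕ)+1, h⟩ - θ i) else 1 := by
          rw [heL, hθc, hθm]
        have hkey := QTVD.abs_add_sub_eq (θ ⟨(i:ℕ)+1, h⟩ - θ i) t ht0
          (fun hx => by rw [heL', if_pos hx] at htL; exact htL)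
        rw [hA']
        simp only [add_zero, zero_add]
        rw [show θ ⟨(i:ℕ)+1, h⟩ + t - θ i = (θ ⟨(i:ℕ)+1, h⟩ - θ i) + t from by ring, hkey]
      · -- both outside
        rw [if_neg (fun hh => hp ((hmem _).mp hh)), if_neg (fun hh => hq ((hmem _).mp hh))]
        rw [if_neg (by omega), if_neg (by rintro rfl; omega)]
        ring_nf
    · rw [dif_neg h, dif_neg h]
      rw [if_neg (show ¬((i:ℕ) + 1 = (c:ℕ)) from by omega)]
      by_cases hid : i = d
      · subst hid
        rw [if_pos rfl, hB, dif_neg h]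
        ring
      · rw [if_neg hid]; ring
  rw [Finset.sum_congr rfl (fun i _ => key i), Finset.sum_add_distrib]
  have hsum2 : (∑ i : Fin n, if i = d then -B * t else 0) = -B * t := by
    rw [Finset.sum_ite_eq' Finset.univ d (fun _ => -B * t), if_pos (Finset.mem_univ d)]
  have hsum1 : (∑ i : Fin n, if (i : ℕ) + 1 = (c : ℕ) then A * t else 0) = A * t := by
    by_cases hc0 : 0 < (c : ℕ)
    · have : ∀ i : Fin n, ((i : ℕ) + 1 = (c : ℕ)) ↔ i = cm := by
        intro i
        constructor
        · intro hh; exact Fin.ext (show (i:ℕ) = (c:ℕ) - 1 from by omega)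
        · rintro rfl; show (c:ℕ) - 1 + 1 = (c:ℕ); omega
      rw [Finset.sum_congr rfl (fun i _ => by rw [if_congr (this i) rfl rfl])]
      rw [Finset.sum_ite_eq' Finset.univ cm (fun _ => A * t), if_pos (Finset.mem_univ cm)]
    · rw [Finset.sum_eq_zero (fun i _ => by rw [if_neg (by omega)])]
      rw [hA, if_neg hc0, zero_mul]
  rw [hsum1, hsum2]
  ring
end
end

section
/- Let θ̂∈ℝ^n and let Ĵ=[a:b]⊆[1:n] be a discrete interval such that θ̂_{a−1}>θ̂_a whenever a>1, and θ̂_b<θ̂_{b+1} whenever b<n. Then for every discrete subinterval I=[c:d]⊆Ĵ, it holds that σ_{c−1}·1{c≠1} − σ_d·1{d≠n} ≤ 2·C_{I,Ĵ}, where (when c>1) σ_{c−1}:=sign_+(θ̂_c−θ̂_{c−1}) and (when d<n) σ_d:=sign_−(θ̂_{d+1}−θ̂_d), with sign_+(x)=+1 if x≥0 and −1 if x<0, and sign_−(x)=+1 if x>0 and −1 if x≤0. -/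
open scoped BigOperators

noncomputable section

set_option maxHeartbeats 1600000 in
/-- Sign bound via `C_{I,Ĵ}`.
Let `Ĵ = [a:b]` satisfy `θ_{a-1} > θ_a` whenever `a > 1` and `θ_b < θ_{b+1}`
whenever `b < n`. Then for every subinterval `I = [c:d] ⊆ Ĵ`,
`σ_{c-1}·1{c ≠ 1} - σ_d·1{d ≠ n} ≤ 2 C_{I,Ĵ}`. -/
theorem sign_sum_bounded_by_Cconst
    {n : ℕ} (θ : Fin n → ℝ) (a b : Fin n) (hab : a ≤ b)
    (hl : ∀ _h : 0 < (a : ℕ),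
      θ a < θ ⟨(a : ℕ) - 1, lt_of_le_of_lt (Nat.sub_le _ _) a.isLt⟩)
    (hr : ∀ h : (b : ℕ) + 1 < n, θ b < θ ⟨(b : ℕ) + 1, h⟩) :
    ∀ c d : Fin n, a ≤ c → c ≤ d → d ≤ b →
      (if 0 < (c : ℕ) then
          QTVD.signP (θ c - θ ⟨(c : ℕ) - 1, lt_of_le_of_lt (Nat.sub_le _ _) c.isLt⟩)
        else 0)
      - (if h : (d : ℕ) + 1 < n then QTVD.signM (θ ⟨(d : ℕ) + 1, h⟩ - θ d) else 0)
      ≤ 2 * QTVD.Cconst n c d a b := by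
  have hP1 : ∀ x : ℝ, QTVD.signP x ≤ 1 := fun x => by
    unfold QTVD.signP; split <;> norm_num
  have hP2 : ∀ x : ℝ, -1 ≤ QTVD.signP x := fun x => by
    unfold QTVD.signP; split <;> norm_num
  have hM1 : ∀ x : ℝ, QTVD.signM x ≤ 1 := fun x => by
    unfold QTVD.signM; split <;> norm_num
  have hM2 : ∀ x : ℝ, -1 ≤ QTVD.signM x := fun x => by
    unfold QTVD.signM; split <;> norm_num
  have hPneg : ∀ x : ℝ, x < 0 → QTVD.signP x = -1 := fun x hx => by
    unfold QTVD.signP; rw [if_neg (by linarith)]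
  have hMpos : ∀ x : ℝ, 0 < x → QTVD.signM x = 1 := fun x hx => by
    unfold QTVD.signM; rw [if_pos hx]
  intro c d hac hcd hdb
  have hacn : (a : ℕ) ≤ (c : ℕ) := hac
  have hcdn : (c : ℕ) ≤ (d : ℕ) := hcd
  have hdbn : (d : ℕ) ≤ (b : ℕ) := hdb
  have hblt := b.isLt
  have hclt := c.isLt
  by_cases hc0 : 0 < (c : ℕ) <;> by_cases hdn : (d : ℕ) + 1 < n
  · rw [if_pos hc0, dif_pos hdn]
    set s1 := QTVD.signP (θ c - θ ⟨(c : ℕ) - 1, lt_of_le_of_lt (Nat.sub_le _ _) c.isLt⟩)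
      with hs1
    set s2 := QTVD.signM (θ ⟨(d : ℕ) + 1, hdn⟩ - θ d) with hs2
    have b1 : -1 ≤ s1 := hP2 _
    have b2 : s1 ≤ 1 := hP1 _
    have b3 : -1 ≤ s2 := hM2 _
    have b4 : s2 ≤ 1 := hM1 _
    have E1 : (c : ℕ) = (a : ℕ) → s1 = -1 := by
      intro hca
      have ha0 : 0 < (a : ℕ) := hca ▸ hc0
      have hca' : c = a := Fin.ext hca
      subst hca'
      exact hPneg _ (by have := hl ha0; linarith)
    have E2 : (d : ℕ) = (b : ℕ) → s2 = 1 := by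
      intro hdb'
      have hdb'' : d = b := Fin.ext hdb'
      subst hdb''
      exact hMpos _ (by have := hr hdn; linarith)
    by_cases hca : (c : ℕ) = (a : ℕ) <;> by_cases hdbe : (d : ℕ) = (b : ℕ) <;>
      [skip; skip; skip; skip] <;>
      first
        | (have e1 := E1 hca; have e2 := E2 hdbe;
           unfold QTVD.Cconst; split_ifs <;> first | (exfalso; omega) | linarith)
        | (have e1 := E1 hca;
           unfold QTVD.Cconst; split_ifs <;> first | (exfalso; omega) | linarith)
        | (have e2 := E2 hdbe;
           unfold QTVD.Cconst; split_ifs <;> first | (exfalso; omega) | linarith)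
        | (unfold QTVD.Cconst; split_ifs <;> first | (exfalso; omega) | linarith)
  · rw [if_pos hc0, dif_neg hdn]
    set s1 := QTVD.signP (θ c - θ ⟨(c : ℕ) - 1, lt_of_le_of_lt (Nat.sub_le _ _) c.isLt⟩)
      with hs1
    have b1 : -1 ≤ s1 := hP2 _
    have b2 : s1 ≤ 1 := hP1 _
    have E1 : (c : ℕ) = (a : ℕ) → s1 = -1 := by
      intro hca
      have ha0 : 0 < (a : ℕ) := hca ▸ hc0
      have hca' : c = a := Fin.ext hca
      subst hca'
      exact hPneg _ (by have := hl ha0; linarith)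
    by_cases hca : (c : ℕ) = (a : ℕ) <;>
      first
        | (have e1 := E1 hca;
           unfold QTVD.Cconst; split_ifs <;> first | (exfalso; omega) | linarith)
        | (unfold QTVD.Cconst; split_ifs <;> first | (exfalso; omega) | linarith)
  · rw [if_neg hc0, dif_pos hdn]
    set s2 := QTVD.signM (θ ⟨(d : ℕ) + 1, hdn⟩ - θ d) with hs2
    have b3 : -1 ≤ s2 := hM2 _
    have b4 : s2 ≤ 1 := hM1 _
    have E2 : (d : ℕ) = (b : ℕ) → s2 = 1 := by
      intro hdb'
      have hdb'' : d = b := Fin.ext hdb'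
      subst hdb''
      exact hMpos _ (by have := hr hdn; linarith)
    by_cases hdbe : (d : ℕ) = (b : ℕ) <;>
      first
        | (have e2 := E2 hdbe;
           unfold QTVD.Cconst; split_ifs <;> first | (exfalso; omega) | linarith)
        | (unfold QTVD.Cconst; split_ifs <;> first | (exfalso; omega) | linarith)
  · rw [if_neg hc0, dif_neg hdn]
    unfold QTVD.Cconst
    split_ifs <;> first | (exfalso; omega) | linarith
end
end

section
/- Let 0<τ1≤τ2<1, let λ≥0 and let P:ℝ^n→ℝ be submodular. For i=1,2, define G^{τi}(θ)=Σ_{j=1}^n ρ_{τi}(y_j−θ_j) + λ·P(θ) and let θ̂^{(i)} be any minimizer of G^{τi} over ℝ^n. Define θ̃^{(1)} = θ̂^{(1)} ∧ θ̂^{(2)} (coordinatewise minimum) and θ̃^{(2)} = θ̂^{(1)} ∨ θ̂^{(2)} (coordinatewise maximum). Then θ̃^{(1)} is a minimizer of G^{τ1} and θ̃^{(2)} is a minimizer of G^{τ2}. -/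
open scoped BigOperators

noncomputable section

/-
Write `ρ_τ(x) = τ x + (-x)⁺`. For a single coordinate, replacing the pair `(a, b)` by
`(min a b, max a b)` in `ρ_{τ₁}(c - ·) + ρ_{τ₂}(c - ·)` leaves the `(-x)⁺` parts unchanged and
changes the linear parts by `(τ₂ - τ₁)(min a b - a) ≤ 0`. Together with submodularity of `λ P`
this gives `G^{τ₁}(θ₁ ∧ θ₂) + G^{τ₂}(θ₁ ∨ θ₂) ≤ G^{τ₁}(θ₁) + G^{τ₂}(θ₂)`, and since each term on
the left is at least the corresponding minimum on the right, each attains it.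
-/

theorem forall_le_of_add_le_of_forall_le {α β : Type*} [AddCommMonoid β] [PartialOrder β]
    [IsOrderedCancelAddMonoid β] {f g : α → β} {a b a' b' : α}
    (ha : ∀ x, f a ≤ f x) (hb : ∀ x, g b ≤ g x) (h : f a' + g b' ≤ f a + g b) :
    (∀ x, f a' ≤ f x) ∧ (∀ x, g b' ≤ g x) := by
  refine ⟨fun x => ?_, fun x => ?_⟩
  · have : f a' + g b' ≤ f a + g b' := h.trans (add_le_add_right (hb b') _)
    exact (le_of_add_le_add_right this).trans (ha x)
  · have : f a' + g b' ≤ f a' + g b := h.trans (add_le_add_left (ha a') _)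
    exact (le_of_add_le_add_left this).trans (hb x)

namespace QTVD

theorem qloss_sub_min_add_qloss_sub_max_le {τ₁ τ₂ : ℝ} (hτ : τ₁ ≤ τ₂) (a b c : ℝ) :
    qloss τ₁ (c - min a b) + qloss τ₂ (c - max a b) ≤ qloss τ₁ (c - a) + qloss τ₂ (c - b) := by
  rcases le_total a b with h | h
  · rw [min_eq_left h, max_eq_right h]
  · rw [min_eq_right h, max_eq_left h]
    simp only [qloss_eq_mul_add_max]
    nlinarith

theorem Gobj_inf_add_Gobj_sup_le {n : ℕ} {τ₁ τ₂ lam : ℝ} (hτ : τ₁ ≤ τ₂) (hlam : 0 ≤ lam)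
    (y : Fin n → ℝ) {P : (Fin n → ℝ) → ℝ} (hP : Submodular P) (θ₁ θ₂ : Fin n → ℝ) :
    Gobj τ₁ lam y P (θ₁ ⊓ θ₂) + Gobj τ₂ lam y P (θ₁ ⊔ θ₂) ≤
      Gobj τ₁ lam y P θ₁ + Gobj τ₂ lam y P θ₂ := by
  have hloss : ∑ j, (qloss τ₁ (y j - (θ₁ ⊓ θ₂) j) + qloss τ₂ (y j - (θ₁ ⊔ θ₂) j)) ≤
      ∑ j, (qloss τ₁ (y j - θ₁ j) + qloss τ₂ (y j - θ₂ j)) :=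
    Finset.sum_le_sum fun j _ => qloss_sub_min_add_qloss_sub_max_le hτ (θ₁ j) (θ₂ j) (y j)
  have hpen := mul_le_mul_of_nonneg_left (hP θ₁ θ₂) hlam
  rw [Finset.sum_add_distrib, Finset.sum_add_distrib] at hloss
  unfold Gobj
  linarith

end QTVD

theorem submodular_lattice_of_minimizers_general
    {n : ℕ} (y : Fin n → ℝ) (τ₁ τ₂ lam : ℝ)
    (hτ12 : τ₁ ≤ τ₂) (hlam : 0 ≤ lam)
    (P : (Fin n → ℝ) → ℝ) (hP : QTVD.Submodular P)
    (θ₁ θ₂ : Fin n → ℝ)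
    (hθ₁ : ∀ η : Fin n → ℝ, QTVD.Gobj τ₁ lam y P θ₁ ≤ QTVD.Gobj τ₁ lam y P η)
    (hθ₂ : ∀ η : Fin n → ℝ, QTVD.Gobj τ₂ lam y P θ₂ ≤ QTVD.Gobj τ₂ lam y P η) :
    (∀ η : Fin n → ℝ, QTVD.Gobj τ₁ lam y P (θ₁ ⊓ θ₂) ≤ QTVD.Gobj τ₁ lam y P η) ∧
    (∀ η : Fin n → ℝ, QTVD.Gobj τ₂ lam y P (θ₁ ⊔ θ₂) ≤ QTVD.Gobj τ₂ lam y P η) :=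
  forall_le_of_add_le_of_forall_le hθ₁ hθ₂ (QTVD.Gobj_inf_add_Gobj_sup_le hτ12 hlam y hP θ₁ θ₂)

/-- Lattice property of minimizers of penalized quantile
regression with a submodular penalty. For `0 < τ₁ ≤ τ₂ < 1`, `λ ≥ 0` and a
submodular penalty `P`, if `θ̂⁽¹⁾` minimizes `G^{τ₁}` and `θ̂⁽²⁾` minimizes
`G^{τ₂}`, then the coordinatewise minimum minimizes `G^{τ₁}` and the
coordinatewise maximum minimizes `G^{τ₂}`. -/
theorem submodular_lattice_of_minimizers
    {n : ℕ} (y : Fin n → ℝ) (τ₁ τ₂ lam : ℝ)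
    (hτ1 : 0 < τ₁) (hτ12 : τ₁ ≤ τ₂) (hτ2 : τ₂ < 1) (hlam : 0 ≤ lam)
    (P : (Fin n → ℝ) → ℝ) (hP : QTVD.Submodular P)
    (θ₁ θ₂ : Fin n → ℝ)
    (hθ₁ : ∀ η : Fin n → ℝ, QTVD.Gobj τ₁ lam y P θ₁ ≤ QTVD.Gobj τ₁ lam y P η)
    (hθ₂ : ∀ η : Fin n → ℝ, QTVD.Gobj τ₂ lam y P θ₂ ≤ QTVD.Gobj τ₂ lam y P η) :
    (∀ η : Fin n → ℝ, QTVD.Gobj τ₁ lam y P (θ₁ ⊓ θ₂) ≤ QTVD.Gobj τ₁ lam y P η) ∧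
    (∀ η : Fin n → ℝ, QTVD.Gobj τ₂ lam y P (θ₁ ⊔ θ₂) ≤ QTVD.Gobj τ₂ lam y P η) :=
  submodular_lattice_of_minimizers_general y τ₁ τ₂ lam hτ12 hlam P hP θ₁ θ₂ hθ₁ hθ₂
end
end

section
/- Fix a data vector y∈ℝ^n, a tuning parameter λ≥0 and a submodular penalty P:ℝ^n→ℝ. For τ∈(0,1) define G^τ(θ)=Σ_{j=1}^n ρ_τ(y_j−θ_j) + λ·P(θ). Let 0<τ1<τ2<1 and let θ̂^{τ1} and θ̂^{τ2} be any minimizers of G^{τ1} and G^{τ2}, respectively. Then θ̂^{τ1}_i ≤ θ̂^{τ2}_i for all i∈[1:n]; i.e., any penalized quantile regression estimator with a submodular penalty and a common tuning parameter is intrinsically non-crossing across quantile levels. -/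
open scoped BigOperators

noncomputable section

lemma qloss_eq (τ x : ℝ) : QTVD.qloss τ x = τ * x + max (-x) 0 := by
  unfold QTVD.qloss
  rcases le_total x 0 with h | h
  · rw [max_eq_right (by nlinarith : τ * x ≤ (τ - 1) * x), max_eq_left (by linarith)]
    ring
  · rw [max_eq_left (by nlinarith : (τ - 1) * x ≤ τ * x), max_eq_right (by linarith)]
    ring

lemma qloss_swap_le (τ₁ τ₂ yv a b : ℝ) (h : τ₁ ≤ τ₂) :
    QTVD.qloss τ₁ (yv - min a b) + QTVD.qloss τ₂ (yv - max a b) ≤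
      QTVD.qloss τ₁ (yv - a) + QTVD.qloss τ₂ (yv - b) := by
  rcases le_total a b with hab | hab
  · rw [min_eq_left hab, max_eq_right hab]
  · rw [min_eq_right hab, max_eq_left hab, qloss_eq, qloss_eq, qloss_eq, qloss_eq]
    nlinarith [mul_nonneg (sub_nonneg.2 h) (sub_nonneg.2 hab)]

lemma qloss_swap_lt (τ₁ τ₂ yv a b : ℝ) (h : τ₁ < τ₂) (hab : b < a) :
    QTVD.qloss τ₁ (yv - min a b) + QTVD.qloss τ₂ (yv - max a b) <
      QTVD.qloss τ₁ (yv - a) + QTVD.qloss τ₂ (yv - b) := by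
  rw [min_eq_right hab.le, max_eq_left hab.le, qloss_eq, qloss_eq, qloss_eq, qloss_eq]
  nlinarith [mul_pos (sub_pos.2 h) (sub_pos.2 hab)]

/-- Non-crossing for penalized quantile regression with a
submodular penalty. For `0 < τ₁ < τ₂ < 1`, `λ ≥ 0` and a submodular penalty `P`,
any minimizer of `G^{τ₁}` lies coordinatewise below any minimizer of `G^{τ₂}`. -/
theorem submodular_penalized_quantile_noncrossing
    {n : ℕ} (y : Fin n → ℝ) (τ₁ τ₂ lam : ℝ)
    (hτ1 : 0 < τ₁) (hτ12 : τ₁ < τ₂) (hτ2 : τ₂ < 1) (hlam : 0 ≤ lam)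
    (P : (Fin n → ℝ) → ℝ) (hP : QTVD.Submodular P)
    (θ₁ θ₂ : Fin n → ℝ)
    (hθ₁ : ∀ η : Fin n → ℝ, QTVD.Gobj τ₁ lam y P θ₁ ≤ QTVD.Gobj τ₁ lam y P η)
    (hθ₂ : ∀ η : Fin n → ℝ, QTVD.Gobj τ₂ lam y P θ₂ ≤ QTVD.Gobj τ₂ lam y P η) :
    ∀ i : Fin n, θ₁ i ≤ θ₂ i := by
  intro i
  by_contra hcon
  push_neg at hcon
  -- Optimality at meet and join
  have h1 := hθ₁ (θ₁ ⊓ θ₂)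
  have h2 := hθ₂ (θ₁ ⊔ θ₂)
  have hsub := hP θ₁ θ₂
  have hPle : lam * (P (θ₁ ⊔ θ₂) + P (θ₁ ⊓ θ₂)) ≤ lam * (P θ₁ + P θ₂) :=
    mul_le_mul_of_nonneg_left hsub hlam
  unfold QTVD.Gobj at h1 h2
  -- sum inequality: quantile losses at (θ₁,θ₂) ≤ at (meet, join)
  have hsum : (∑ j : Fin n, QTVD.qloss τ₁ (y j - θ₁ j)) +
      (∑ j : Fin n, QTVD.qloss τ₂ (y j - θ₂ j)) ≤
      (∑ j : Fin n, QTVD.qloss τ₁ (y j - (θ₁ ⊓ θ₂) j)) +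
      (∑ j : Fin n, QTVD.qloss τ₂ (y j - (θ₁ ⊔ θ₂) j)) := by linarith
  have hmin : ∀ j : Fin n, (θ₁ ⊓ θ₂) j = min (θ₁ j) (θ₂ j) := fun j => rfl
  have hmax : ∀ j : Fin n, (θ₁ ⊔ θ₂) j = max (θ₁ j) (θ₂ j) := fun j => rfl
  have hlt : (∑ j : Fin n, (QTVD.qloss τ₁ (y j - (θ₁ ⊓ θ₂) j) +
        QTVD.qloss τ₂ (y j - (θ₁ ⊔ θ₂) j))) <
      (∑ j : Fin n, (QTVD.qloss τ₁ (y j - θ₁ j) + QTVD.qloss τ₂ (y j - θ₂ j))) := by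
    apply Finset.sum_lt_sum
    · intro j _
      rw [hmin j, hmax j]
      exact qloss_swap_le τ₁ τ₂ (y j) (θ₁ j) (θ₂ j) hτ12.le
    · exact ⟨i, Finset.mem_univ i, by
        rw [hmin i, hmax i]
        exact qloss_swap_lt τ₁ τ₂ (y i) (θ₁ i) (θ₂ i) hτ12 hcon⟩
  rw [Finset.sum_add_distrib, Finset.sum_add_distrib] at hlt
  linarith
end
end
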